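/- arXiv:math/9903077 — 14 statements merged into one kernel-verified Lean document; each statement's English description precedes it below -/
import Mathlib

section
/- Let L be a Lie algebra over a field k of characteristic not 2. Suppose x and y are extremal elements of L, i.e., there exist linear functionals f_x, f_y on L with [x,[x,z]] = f_x(z)x and [y,[y,z]] = f_y(z)y for all z in L. Then f_x(y) = f_y(x). -/
/-- Lemma 3.1: for extremal elements `x, y` with functionals `fx, fy`, `fx y = fy x`. -/
theorem extremal_form_symm {k L : Type*} [Field k] [LieRing L] [LieAlgebra k L]
    (hchar : (2 : k) ≠ 0) (x y : L) (hx0 : x ≠ 0) (hy0 : y ≠ 0)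
    (fx fy : L →ₗ[k] k)
    (hx : ∀ z : L, ⁅x, ⁅x, z⁆⁆ = fx z • x)
    (hy : ∀ z : L, ⁅y, ⁅y, z⁆⁆ = fy z • y) :
    fx y = fy x := by
  by_cases h : ⁅x, y⁆ = 0
  · have h1 : fx y • x = 0 := by rw [← hx y, h, lie_zero]
    have h2 : fy x • y = 0 := by
      have hyx : ⁅y, x⁆ = 0 := by rw [← neg_eq_zero, lie_skew, h]
      rw [← hy x, hyx, lie_zero]
    have e1 : fx y = 0 := by
      rcases smul_eq_zero.mp h1 with h' | h'
      · exact h'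
      · exact absurd h' hx0
    have e2 : fy x = 0 := by
      rcases smul_eq_zero.mp h2 with h' | h'
      · exact h'
      · exact absurd h' hy0
    rw [e1, e2]
  · have hyu : ⁅y, ⁅x, y⁆⁆ = -(fy x • y) := by
      rw [← lie_skew x y, lie_neg, hy x]
    have way1 : ⁅x, ⁅y, ⁅x, y⁆⁆⁆ = -(fy x • ⁅x, y⁆) := by
      rw [hyu]; simp
    have way2 : ⁅x, ⁅y, ⁅x, y⁆⁆⁆ = -(fx y • ⁅x, y⁆) := by
      rw [leibniz_lie x y ⁅x, y⁆, lie_self, zero_add, hx y, lie_smul]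
      rw [← lie_skew x y, smul_neg, neg_neg]
    have key : (fx y - fy x) • ⁅x, y⁆ = 0 := by
      rw [sub_smul, sub_eq_zero]
      have := way1.symm.trans way2
      exact (neg_inj.mp this).symm
    rcases smul_eq_zero.mp key with h' | h'
    · exact sub_eq_zero.mp h'
    · exact absurd h' h
end

section
/- Let L be a Lie algebra over a field k of characteristic not 2 and let x be an extremal element with associated functional f_x. Then for all y, z in L: 2[[x,y],[x,z]] = f_x([y,z])x + f_x(z)[x,y] − f_x(y)[x,z]. -/
/-- Premet's first identity for an extremal element `x`. -/
theorem extremal_identity1 {k L : Type*} [Field k] [LieRing L] [LieAlgebra k L]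
    (hchar : (2 : k) ≠ 0) (x : L) (fx : L →ₗ[k] k)
    (hx : ∀ w : L, ⁅x, ⁅x, w⁆⁆ = fx w • x) (y z : L) :
    (2 : k) • ⁅⁅x, y⁆, ⁅x, z⁆⁆ =
      fx ⁅y, z⁆ • x + fx z • ⁅x, y⁆ - fx y • ⁅x, z⁆ := by
  have h : ⁅x, ⁅x, ⁅y, z⁆⁆⁆ =
      ⁅⁅x, ⁅x, y⁆⁆, z⁆ + ⁅⁅x, y⁆, ⁅x, z⁆⁆ + (⁅⁅x, y⁆, ⁅x, z⁆⁆ + ⁅y, ⁅x, ⁅x, z⁆⁆⁆) := by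
    rw [leibniz_lie x y z, lie_add, leibniz_lie x ⁅x, y⁆ z, leibniz_lie x y ⁅x, z⁆]
  rw [hx, hx, hx, smul_lie, lie_smul, ← lie_skew y x, smul_neg] at h
  rw [two_smul]
  linear_combination (norm := module) h.symm
end

section
/- Let L be a Lie algebra over a field k of characteristic not 2 and let x be an extremal element with associated functional f_x. Then for all y, z in L: 2[x,[y,[x,z]]] = f_x([y,z])x − f_x(z)[x,y] − f_x(y)[x,z]. -/
/-- Premet's second identity for an extremal element `x`. -/
theorem extremal_identity2 {k L : Type*} [Field k] [LieRing L] [LieAlgebra k L]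
    (hchar : (2 : k) ≠ 0) (x : L) (fx : L →ₗ[k] k)
    (hx : ∀ w : L, ⁅x, ⁅x, w⁆⁆ = fx w • x) (y z : L) :
    (2 : k) • ⁅x, ⁅y, ⁅x, z⁆⁆⁆ =
      fx ⁅y, z⁆ • x - fx z • ⁅x, y⁆ - fx y • ⁅x, z⁆ := by
  have hB : ⁅⁅x, y⁆, ⁅x, z⁆⁆ = ⁅x, ⁅y, ⁅x, z⁆⁆⁆ + fx z • ⁅x, y⁆ := by
    rw [lie_lie, hx z, lie_smul, sub_eq_add_neg, ← smul_neg, lie_skew]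
  have key : fx ⁅y, z⁆ • x =
      fx y • ⁅x, z⁆ + (⁅x, ⁅y, ⁅x, z⁆⁆⁆ + fx z • ⁅x, y⁆) + ⁅x, ⁅y, ⁅x, z⁆⁆⁆ := by
    rw [← hx ⁅y, z⁆, leibniz_lie x y z, lie_add, leibniz_lie x ⁅x, y⁆ z, hx y,
      smul_lie, hB]
  rw [two_smul, eq_sub_iff_add_eq, eq_sub_iff_add_eq, key]
  abel
end

section
/- Let L be a Lie algebra over a field k of characteristic not 2, and let x, y be extremal elements with f_x(y) = 0 and [x,y] ≠ 0. Then [x,y] is an extremal element, with associated functional given by f_{[x,y]}(z) = (1/2)(f_x([y,z]) − f_y([x,z])) for all z in L. -/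
/-- Premet's identity for an extremal element `x`. -/
lemma premet_identity {k L : Type*} [Field k] [LieRing L] [LieAlgebra k L]
    (x : L) (fx : L →ₗ[k] k) (hx : ∀ w : L, ⁅x, ⁅x, w⁆⁆ = fx w • x) (u v : L) :
    (2 : k) • ⁅⁅x, u⁆, ⁅x, v⁆⁆ = fx ⁅u, v⁆ • x - fx u • ⁅x, v⁆ - fx v • ⁅u, x⁆ := by
  have key : fx ⁅u, v⁆ • x =
      (fx u • ⁅x, v⁆ + ⁅⁅x, u⁆, ⁅x, v⁆⁆) + (⁅⁅x, u⁆, ⁅x, v⁆⁆ + fx v • ⁅u, x⁆) := by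
    calc fx ⁅u, v⁆ • x = ⁅x, ⁅x, ⁅u, v⁆⁆⁆ := (hx _).symm
      _ = ⁅x, ⁅⁅x, u⁆, v⁆⁆ + ⁅x, ⁅u, ⁅x, v⁆⁆⁆ := by rw [leibniz_lie x u v, lie_add]
      _ = (fx u • ⁅x, v⁆ + ⁅⁅x, u⁆, ⁅x, v⁆⁆) + (⁅⁅x, u⁆, ⁅x, v⁆⁆ + fx v • ⁅u, x⁆) := by
          rw [leibniz_lie x ⁅x, u⁆ v, leibniz_lie x u ⁅x, v⁆, hx u, hx v, smul_lie, lie_smul]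
  rw [key]; module

/-- Corollary 3.4: if `x, y` are extremal with `fx y = 0` and `⁅x,y⁆ ≠ 0`, then `⁅x,y⁆` is
extremal with functional `z ↦ (fx ⁅y,z⁆ - fy ⁅x,z⁆)/2`. -/
theorem lie_extremal_of_form_zero {k L : Type*} [Field k] [LieRing L] [LieAlgebra k L]
    (hchar : (2 : k) ≠ 0) (x y : L) (hx0 : x ≠ 0) (hy0 : y ≠ 0)
    (fx fy : L →ₗ[k] k)
    (hx : ∀ w : L, ⁅x, ⁅x, w⁆⁆ = fx w • x)
    (hy : ∀ w : L, ⁅y, ⁅y, w⁆⁆ = fy w • y)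
    (hfxy : fx y = 0) (hxy : ⁅x, y⁆ ≠ (0 : L)) :
    ∀ z : L, ⁅⁅x, y⁆, ⁅⁅x, y⁆, z⁆⁆ = ((fx ⁅y, z⁆ - fy ⁅x, z⁆) / 2) • ⁅x, y⁆ := by
  -- first, `fy x = 0`
  have hfyx : fy x = 0 := by
    have h1 : ⁅x, ⁅y, ⁅x, y⁆⁆⁆ = ⁅⁅x, y⁆, ⁅x, y⁆⁆ + ⁅y, ⁅x, ⁅x, y⁆⁆⁆ := leibniz_lie x y ⁅x, y⁆
    rw [lie_self, zero_add, hx y, hfxy, zero_smul, lie_zero] at h1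
    have h2 : ⁅y, ⁅x, y⁆⁆ = -(fy x • y) := by
      rw [← lie_skew x y, lie_neg, hy x]
    rw [h2, lie_neg, lie_smul, neg_eq_zero] at h1
    rcases smul_eq_zero.mp h1 with h | h
    · exact h
    · exact absurd h hxy
  intro z
  have e1 := premet_identity x fx hx y ⁅y, z⁆
  have e2 := premet_identity y fy hy x ⁅x, z⁆
  simp only [hy z, hx z, map_smul, hfxy, hfyx, smul_eq_mul, mul_zero, zero_smul, zero_sub,
    sub_zero, neg_zero, zero_add] at e1 e2
  -- e1 : (2:k) • ⁅⁅x,y⁆, ⁅x,⁅y,z⁆⁆⁆ = -(fx ⁅y,z⁆ • ⁅y,x⁆)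
  -- e2 : (2:k) • ⁅⁅y,x⁆, ⁅y,⁅x,z⁆⁆⁆ = -(fy ⁅x,z⁆ • ⁅x,y⁆)
  have hyx : ⁅y, x⁆ = -⁅x, y⁆ := by rw [← neg_neg ⁅y, x⁆, lie_skew]
  rw [hyx, smul_neg, neg_neg] at e1
  rw [hyx, neg_lie, smul_neg, neg_inj] at e2
  have hexp : ⁅⁅x, y⁆, ⁅⁅x, y⁆, z⁆⁆ =
      ⁅⁅x, y⁆, ⁅x, ⁅y, z⁆⁆⁆ - ⁅⁅x, y⁆, ⁅y, ⁅x, z⁆⁆⁆ := by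
    rw [lie_lie x y z, lie_sub]
  apply smul_right_injective L hchar
  have hdiv : (2 : k) * ((fx ⁅y, z⁆ - fy ⁅x, z⁆) / 2) = fx ⁅y, z⁆ - fy ⁅x, z⁆ := by
    field_simp
  show (2 : k) • ⁅⁅x, y⁆, ⁅⁅x, y⁆, z⁆⁆ = (2 : k) • ((fx ⁅y, z⁆ - fy ⁅x, z⁆) / 2) • ⁅x, y⁆
  rw [hexp, smul_sub, e1, e2, smul_smul, hdiv, sub_smul]
end

section
/- Let L be a Lie algebra over a field k of characteristic not 2, let x be an extremal element with functional f_x, and let s ∈ k. Then the linear map exp(x,s) := id + s·ad_x + (s²/2)·ad_x² is an automorphism of the Lie algebra L. -/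
/-- The exponential `exp(x,s) = 1 + s ad_x + (s²/2) ad_x²` of an extremal element is a Lie
algebra automorphism of `L`. -/
theorem exp_extremal_isAutomorphism {k L : Type*} [Field k] [LieRing L] [LieAlgebra k L]
    (hchar : (2 : k) ≠ 0) (x : L) (fx : L →ₗ[k] k)
    (hx : ∀ w : L, ⁅x, ⁅x, w⁆⁆ = fx w • x) (s : k) :
    ∃ e : L ≃ₗ⁅k⁆ L, ∀ y : L, e y = y + s • ⁅x, y⁆ + (s ^ 2 / 2) • ⁅x, ⁅x, y⁆⁆ := by
  set D : L →ₗ[k] L := LieAlgebra.ad k L x with hDdef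
  set E : k → L →ₗ[k] L := fun t => LinearMap.id + t • D + (t ^ 2 / 2) • (D ∘ₗ D) with hEdef
  have hEapp : ∀ (t : k) (y : L), E t y = y + t • ⁅x, y⁆ + (t ^ 2 / 2) • ⁅x, ⁅x, y⁆⁆ := by
    intro t y
    simp [hEdef, hDdef, LieAlgebra.ad_apply]
  have h3 : ∀ y : L, ⁅x, ⁅x, ⁅x, y⁆⁆⁆ = (0 : L) := by
    intro y; rw [hx y, lie_smul, lie_self, smul_zero]
  have hcomp : ∀ (t : k) (y : L), E (-t) (E t y) = y := by
    intro t y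
    rw [hEapp, hEapp]
    simp only [lie_add, lie_smul, lie_self, smul_zero, add_zero, h3, lie_zero]
    match_scalars <;> field_simp <;> ring
  have hlie : ∀ y z : L, ⁅E s y, E s z⁆ = E s ⁅y, z⁆ := by
    intro y z
    have h := hx ⁅y, z⁆
    rw [leibniz_lie x y z, lie_add, leibniz_lie x ⁅x, y⁆ z, leibniz_lie x y ⁅x, z⁆,
      hx y, hx z, smul_lie, lie_smul, ← lie_skew y x, smul_neg] at h
    have hyx : ⁅y, x⁆ = -⁅x, y⁆ := by rw [← lie_skew]
    have hBx : ⁅(⁅x, y⁆ : L), x⁆ = -(fx y • x) := by rw [← lie_skew, hx y]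
    have hxyz : ⁅x, ⁅y, z⁆⁆ = ⁅⁅x, y⁆, z⁆ + ⁅y, ⁅x, z⁆⁆ := leibniz_lie x y z
    rw [hEapp s y, hEapp s z, hEapp s ⁅y, z⁆, hx ⁅y, z⁆, hxyz, hx y, hx z]
    simp only [lie_add, add_lie, lie_smul, smul_lie, lie_self, smul_zero, add_zero, zero_smul,
      smul_neg, hyx, hBx, hx z, smul_smul]
    linear_combination (norm := skip) (s ^ 2 / 2 : k) • h
    match_scalars <;> field_simp <;> ring
  have hrinv : ∀ y : L, E s (E (-s) y) = y := fun y => by simpa using hcomp (-s) y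
  exact ⟨{ toLieHom := { toLinearMap := E s, map_lie' := @fun y z => (hlie y z).symm },
           invFun := E (-s), left_inv := hcomp s, right_inv := hrinv }, hEapp s⟩
end

section
/- Let L be a Lie algebra over a field k of characteristic not 2 that is generated as a Lie algebra by a set of extremal elements. Then L is spanned as a k-vector space by its extremal elements. -/
section Aux

variable {k L : Type*} [Field k] [LieRing L] [LieAlgebra k L]

/-- Key lemma: the bracket of two extremal elements lies in the span of the extremal
elements. -/
theorem lie_mem_span_extremal (hchar : (2 : k) ≠ 0) (x y : L) (f g : L →ₗ[k] k)
    (hf : ∀ z : L, ⁅x, ⁅x, z⁆⁆ = f z • x) (hg : ∀ z : L, ⁅y, ⁅y, z⁆⁆ = g z • y) :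
    ⁅x, y⁆ ∈ Submodule.span k {x : L | ∃ f : L →ₗ[k] k, ∀ z : L, ⁅x, ⁅x, z⁆⁆ = f z • x} := by
  by_cases hx0 : x = 0
  · simp [hx0]
  -- f x = 0
  have hfx : f x = 0 := by
    have := hf x
    simp only [lie_self, lie_zero] at this
    rcases (smul_eq_zero.mp this.symm) with h | h
    · exact h
    · exact absurd h hx0
  -- f ⁅x, z⁆ = 0
  have hfxz : ∀ z : L, f ⁅x, z⁆ = 0 := by
    intro z
    have := hf ⁅x, z⁆
    rw [hf z, lie_smul, lie_self, smul_zero] at this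
    rcases (smul_eq_zero.mp this.symm) with h | h
    · exact h
    · exact absurd h hx0
  set D : Module.End k L := LieAlgebra.ad k L x with hD
  have hDapp : ∀ z : L, D z = ⁅x, z⁆ := fun z => rfl
  set E : L →ₗ[k] L := 1 + D + (2⁻¹ : k) • (D * D) with hEdef
  set E' : L →ₗ[k] L := 1 - D + (2⁻¹ : k) • (D * D) with hE'def
  have hE : ∀ z : L, E z = z + ⁅x, z⁆ + (2⁻¹ * f z) • x := by
    intro z
    simp [hEdef, hDapp, hf z, smul_smul]
  have hE' : ∀ z : L, E' z = z - ⁅x, z⁆ + (2⁻¹ * f z) • x := by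
    intro z
    simp [hE'def, hDapp, hf z, smul_smul]
  have hEE' : ∀ z : L, E (E' z) = z := by
    intro z
    rw [hE' z, map_add, map_sub, map_smul, hE z, hE ⁅x, z⁆, hE x, hf z, hfxz z, hfx, lie_self]
    match_scalars <;> field_simp <;> try ring
  -- E is a Lie algebra homomorphism
  have hmul : ∀ a b : L, E ⁅a, b⁆ = ⁅E a, E b⁆ := by
    intro a b
    have hskew : ⁅⁅x, a⁆, x⁆ = -(f a • x) := by rw [← lie_skew, hf]
    have h1 : f ⁅a, b⁆ • x =
        f a • ⁅x, b⁆ + ⁅⁅x, a⁆, ⁅x, b⁆⁆ + (⁅⁅x, a⁆, ⁅x, b⁆⁆ + f b • ⁅a, x⁆) := by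
      rw [← hf ⁅a, b⁆]
      rw [leibniz_lie x a b]
      rw [lie_add]
      rw [leibniz_lie x ⁅x, a⁆ b]
      rw [leibniz_lie x a ⁅x, b⁆]
      simp only [hf a, hf b, smul_lie, lie_smul]
      try abel
    rw [hE, hE, hE, mul_smul, h1, leibniz_lie x a b]
    simp only [add_lie, lie_add, smul_lie, lie_smul, lie_self, smul_zero, hskew, hf b]
    match_scalars <;> field_simp <;> try ring
  -- E y is extremal
  have he : ∀ z : L, ⁅E y, ⁅E y, z⁆⁆ = (g.comp E') z • E y := by
    intro z
    conv_lhs => rw [← hEE' z]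
    rw [← hmul y (E' z), ← hmul y ⁅y, E' z⁆, hg (E' z), map_smul]
    simp
  have hxy : ⁅x, y⁆ = E y - y - (2⁻¹ * f y) • x := by rw [hE]; abel
  rw [hxy]
  exact sub_mem (sub_mem (Submodule.subset_span ⟨g.comp E', he⟩)
    (Submodule.subset_span ⟨g, hg⟩)) (Submodule.smul_mem _ _ (Submodule.subset_span ⟨f, hf⟩))

end Aux

/-- Lemma 3.5: a Lie algebra generated by extremal elements is linearly spanned by its
extremal elements. -/
theorem span_extremal_of_lieSpan_extremal {k L : Type*} [Field k] [LieRing L] [LieAlgebra k L]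
    (hchar : (2 : k) ≠ 0) (S : Set L)
    (hS : ∀ x ∈ S, ∃ f : L →ₗ[k] k, ∀ z : L, ⁅x, ⁅x, z⁆⁆ = f z • x)
    (hgen : LieSubalgebra.lieSpan k L S = ⊤) :
    Submodule.span k {x : L | ∃ f : L →ₗ[k] k, ∀ z : L, ⁅x, ⁅x, z⁆⁆ = f z • x} = ⊤ := by
  set Ext : Set L := {x : L | ∃ f : L →ₗ[k] k, ∀ z : L, ⁅x, ⁅x, z⁆⁆ = f z • x} with hExt
  set V : Submodule k L := Submodule.span k Ext with hV
  have hlie : ∀ a ∈ V, ∀ b ∈ V, ⁅a, b⁆ ∈ V := by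
    intro a ha b hb
    induction ha, hb using Submodule.span_induction₂ with
    | mem_mem u v hu hv =>
      obtain ⟨f, hf⟩ := hu
      obtain ⟨g, hg⟩ := hv
      exact lie_mem_span_extremal hchar u v f g hf hg
    | zero_left v hv => simp
    | zero_right u hu => simp
    | add_left u u' v hu hu' hv h1 h2 => rw [add_lie]; exact add_mem h1 h2
    | add_right u v v' hu hv hv' h1 h2 => rw [lie_add]; exact add_mem h1 h2
    | smul_left r u v hu hv h => rw [smul_lie]; exact Submodule.smul_mem _ _ h
    | smul_right r u v hu hv h => rw [lie_smul]; exact Submodule.smul_mem _ _ h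
  let K : LieSubalgebra k L :=
    { V with lie_mem' := fun {a b} ha hb => hlie a ha b hb }
  have hSK : S ⊆ K := fun s hs => Submodule.subset_span (hS s hs)
  have hKtop : K = ⊤ := by
    rw [eq_top_iff, ← hgen]
    exact LieSubalgebra.lieSpan_le.mpr hSK
  rw [eq_top_iff]
  intro v _
  have : v ∈ K := hKtop ▸ trivial
  exact this
end

section
/- Let L be a Lie algebra over a field k of characteristic not 2, and let x, y be extremal elements such that the associated functional f_x is identically zero and [x,y] ≠ 0. Assume L is generated by extremal elements so that the associative symmetric bilinear form f exists. Then [x,y] is extremal with f_{[x,y]} identically zero. -/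
/-- Corollary 3.8: if `x, y` are extremal with `f x = 0` and `⁅x,y⁆ ≠ 0`, then `⁅x,y⁆` is
extremal with vanishing functional. -/
theorem lie_sandwich_of_sandwich {k L : Type*} [Field k] [LieRing L] [LieAlgebra k L]
    (hchar : (2 : k) ≠ 0) (f : L →ₗ[k] L →ₗ[k] k)
    (hsym : ∀ a b : L, f a b = f b a)
    (hassoc : ∀ a b c : L, f a ⁅b, c⁆ = f ⁅a, b⁆ c)
    (hgen : LieSubalgebra.lieSpan k L
      {a : L | a ≠ 0 ∧ ∀ z : L, ⁅a, ⁅a, z⁆⁆ = f a z • a} = ⊤)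
    (x y : L) (hx0 : x ≠ 0) (hy0 : y ≠ 0)
    (hx : ∀ z : L, ⁅x, ⁅x, z⁆⁆ = f x z • x)
    (hy : ∀ z : L, ⁅y, ⁅y, z⁆⁆ = f y z • y)
    (hfx : ∀ z : L, f x z = 0) (hxy : ⁅x, y⁆ ≠ (0 : L)) :
    (∀ z : L, ⁅⁅x, y⁆, ⁅⁅x, y⁆, z⁆⁆ = f ⁅x, y⁆ z • ⁅x, y⁆) ∧
      ∀ z : L, f ⁅x, y⁆ z = 0 := by
  -- x is a sandwich
  have hxx : ∀ z : L, ⁅x, ⁅x, z⁆⁆ = 0 := fun z => by rw [hx, hfx, zero_smul]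
  -- ad x ∘ ad u ∘ ad x = 0
  have key1 : ∀ u z : L, ⁅x, ⁅u, ⁅x, z⁆⁆⁆ = 0 := by
    intro u z
    have hA : ⁅x, ⁅⁅x, u⁆, z⁆⁆ = -⁅x, ⁅u, ⁅x, z⁆⁆⁆ := by
      rw [lie_lie x u z, lie_sub, hxx, zero_sub]
    have hB : ⁅x, ⁅⁅x, u⁆, z⁆⁆ = ⁅x, ⁅u, ⁅x, z⁆⁆⁆ := by
      rw [leibniz_lie x ⁅x, u⁆ z, hxx, zero_lie, zero_add, lie_lie, hxx, lie_zero, sub_zero]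
    have h2 : (2 : k) • ⁅x, ⁅u, ⁅x, z⁆⁆⁆ = 0 := by
      rw [two_smul]
      nth_rewrite 1 [hB.symm.trans hA]
      exact neg_add_cancel _
    rcases smul_eq_zero.mp h2 with h | h
    · exact absurd h hchar
    · exact h
  -- the functional vanishes
  have f0 : ∀ z : L, f ⁅x, y⁆ z = 0 := fun z => by
    rw [← hassoc, hfx]
  have fy0 : ∀ z : L, f y ⁅x, z⁆ = 0 := fun z => by
    rw [hassoc, ← lie_skew y x, map_neg, LinearMap.neg_apply, f0, neg_zero]
  refine ⟨fun z => ?_, f0⟩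
  rw [f0, zero_smul]
  rw [lie_lie x y ⁅⁅x, y⁆, z⁆, lie_lie x y z]
  simp only [lie_sub, hxx, key1, hy, fy0, zero_smul, lie_zero, sub_zero, zero_sub,
    neg_zero, sub_self, sub_zero]
end

section
/- Let L be a Lie algebra over a field k of characteristic not 2 generated by extremal elements x, y, z, u. Then L is spanned as a vector space by 28 explicit monomials: the four generators; the six brackets of pairs; the eight monomials [a,[b,c]] listed as [x,[y,z]], [x,[y,u]], [x,[z,u]], [y,[x,z]], [y,[x,u]], [y,[z,u]], [z,[x,u]], [z,[y,u]]; the six monomials [x,[y,[z,u]]], [x,[z,[y,u]]], [y,[x,[z,u]]], [y,[z,[x,u]]], [z,[x,[y,u]]], [z,[y,[x,u]]]; and the four monomials [x,[y,[z,[x,u]]]], [y,[x,[z,[y,u]]]], [z,[x,[y,[z,u]]]], [u,[x,[y,[z,u]]]]. In particular, dim L ≤ 28. -/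
namespace FourExt

variable {k L : Type*} [Field k] [LieRing L] [LieAlgebra k L]
variable {V : Submodule k L} {a b c w p q r s t g : L}

lemma sw1 (h : ⁅p, q⁆ ∈ V) : ⁅q, p⁆ ∈ V := by
  rw [← lie_skew]; exact V.neg_mem h

lemma sw2 (h : ⁅p, ⁅q, r⁆⁆ ∈ V) : ⁅p, ⁅r, q⁆⁆ ∈ V := by
  rw [← lie_skew r q, lie_neg]; exact V.neg_mem h

lemma sw3 (h : ⁅p, ⁅q, ⁅r, s⁆⁆⁆ ∈ V) : ⁅p, ⁅q, ⁅s, r⁆⁆⁆ ∈ V := by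
  rw [← lie_skew s r, lie_neg, lie_neg]; exact V.neg_mem h

lemma sw4 (h : ⁅p, ⁅q, ⁅r, ⁅s, t⁆⁆⁆⁆ ∈ V) : ⁅p, ⁅q, ⁅r, ⁅t, s⁆⁆⁆⁆ ∈ V := by
  rw [← lie_skew t s, lie_neg, lie_neg, lie_neg]; exact V.neg_mem h

lemma jac3 (a b c : L) : ⁅a, ⁅b, c⁆⁆ = ⁅b, ⁅a, c⁆⁆ - ⁅c, ⁅a, b⁆⁆ := by
  rw [leibniz_lie, ← lie_skew ⁅a, b⁆ c]; abel

lemma ext_mem (ha : ∀ w : L, ∃ c : k, ⁅a, ⁅a, w⁆⁆ = c • a) (haV : a ∈ V) (w : L) :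
    ⁅a, ⁅a, w⁆⁆ ∈ V := by
  obtain ⟨c, hc⟩ := ha w; rw [hc]; exact V.smul_mem _ haV

lemma ext_lie_mem (ha : ∀ w : L, ∃ c : k, ⁅a, ⁅a, w⁆⁆ = c • a) (g : L) (hga : ⁅g, a⁆ ∈ V)
    (w : L) : ⁅g, ⁅a, ⁅a, w⁆⁆⁆ ∈ V := by
  obtain ⟨c, hc⟩ := ha w; rw [hc, lie_smul]; exact V.smul_mem _ hga

lemma l2_eq (h2 : (2 : k) ≠ 0) (ha : ∀ w : L, ∃ c : k, ⁅a, ⁅a, w⁆⁆ = c • a) (b w : L) :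
    ∃ c1 c2 c3 : k, ⁅a, ⁅b, ⁅a, w⁆⁆⁆ = c1 • a + c2 • ⁅a, b⁆ + c3 • ⁅a, w⁆ := by
  obtain ⟨cb, hcb⟩ := ha b
  obtain ⟨cw, hcw⟩ := ha w
  obtain ⟨cd, hcd⟩ := ha ⁅b, w⁆
  have eq1 : ⁅a, ⁅b, ⁅a, w⁆⁆⁆ = ⁅⁅a, b⁆, ⁅a, w⁆⁆ + cw • ⁅b, a⁆ := by
    rw [leibniz_lie, hcw, lie_smul]
  have eq2 : cd • a = cb • ⁅a, w⁆ + ⁅⁅a, b⁆, ⁅a, w⁆⁆ + ⁅a, ⁅b, ⁅a, w⁆⁆⁆ := by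
    rw [← hcd, leibniz_lie a b w, lie_add, leibniz_lie a ⁅a, b⁆ w, hcb, smul_lie]
  have hba : ⁅b, a⁆ = -⁅a, b⁆ := by rw [← lie_skew]
  have h2Q : (2 : k) • ⁅a, ⁅b, ⁅a, w⁆⁆⁆ = cd • a - cb • ⁅a, w⁆ + cw • ⁅b, a⁆ := by
    rw [two_smul]
    nth_rewrite 1 [eq1]
    rw [eq2]
    abel
  refine ⟨2⁻¹ * cd, -(2⁻¹ * cw), -(2⁻¹ * cb), ?_⟩
  have key : ⁅a, ⁅b, ⁅a, w⁆⁆⁆ = (2 : k)⁻¹ • ((2 : k) • ⁅a, ⁅b, ⁅a, w⁆⁆⁆) := by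
    rw [smul_smul, inv_mul_cancel₀ h2, one_smul]
  rw [key, h2Q, hba]
  module

lemma l2_mem (h2 : (2 : k) ≠ 0) (ha : ∀ w : L, ∃ c : k, ⁅a, ⁅a, w⁆⁆ = c • a) (haV : a ∈ V)
    (hab : ⁅a, b⁆ ∈ V) (haw : ⁅a, w⁆ ∈ V) : ⁅a, ⁅b, ⁅a, w⁆⁆⁆ ∈ V := by
  obtain ⟨c1, c2, c3, e⟩ := l2_eq h2 ha b w
  rw [e]
  exact add_mem (add_mem (V.smul_mem _ haV) (V.smul_mem _ hab)) (V.smul_mem _ haw)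

lemma l2_lie_mem (h2 : (2 : k) ≠ 0) (ha : ∀ w : L, ∃ c : k, ⁅a, ⁅a, w⁆⁆ = c • a) (g : L)
    (hga : ⁅g, a⁆ ∈ V) (hgab : ⁅g, ⁅a, b⁆⁆ ∈ V) (hgaw : ⁅g, ⁅a, w⁆⁆ ∈ V) :
    ⁅g, ⁅a, ⁅b, ⁅a, w⁆⁆⁆⁆ ∈ V := by
  obtain ⟨c1, c2, c3, e⟩ := l2_eq h2 ha b w
  rw [e, lie_add, lie_add, lie_smul, lie_smul, lie_smul]
  exact add_mem (add_mem (V.smul_mem _ hga) (V.smul_mem _ hgab)) (V.smul_mem _ hgaw)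

lemma relA (h2 : (2 : k) ≠ 0) (ha : ∀ w : L, ∃ c : k, ⁅a, ⁅a, w⁆⁆ = c • a) (haV : a ∈ V)
    (habc : ⁅a, ⁅b, c⁆⁆ ∈ V) (haw : ⁅a, w⁆ ∈ V)
    (hsw : ⁅a, ⁅c, ⁅b, ⁅a, w⁆⁆⁆⁆ ∈ V) : ⁅a, ⁅b, ⁅c, ⁅a, w⁆⁆⁆⁆ ∈ V := by
  rw [leibniz_lie b c ⁅a, w⁆, lie_add]
  exact add_mem (l2_mem h2 ha haV habc haw) hsw

lemma relB (h2 : (2 : k) ≠ 0) (ha : ∀ w : L, ∃ c : k, ⁅a, ⁅a, w⁆⁆ = c • a) (haV : a ∈ V)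
    (hab : ⁅a, b⁆ ∈ V) (hacw : ⁅a, ⁅c, w⁆⁆ ∈ V)
    (hT : ⁅a, ⁅b, ⁅w, ⁅a, c⁆⁆⁆⁆ ∈ V) : ⁅a, ⁅b, ⁅c, ⁅a, w⁆⁆⁆⁆ ∈ V := by
  have e : ⁅c, ⁅a, w⁆⁆ = ⁅a, ⁅c, w⁆⁆ + ⁅w, ⁅a, c⁆⁆ := by
    rw [leibniz_lie c a w, ← lie_skew ⁅c, a⁆ w, ← lie_skew a c, lie_neg]
    abel
  rw [e, lie_add, lie_add]
  exact add_mem (l2_mem h2 ha haV hab hacw) hT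

lemma bracket_stable (h2 : (2 : k) ≠ 0) {x y z u : L}
    (hx : ∀ w : L, ∃ c : k, ⁅x, ⁅x, w⁆⁆ = c • x)
    (hy : ∀ w : L, ∃ c : k, ⁅y, ⁅y, w⁆⁆ = c • y)
    (hz : ∀ w : L, ∃ c : k, ⁅z, ⁅z, w⁆⁆ = c • z)
    (hu : ∀ w : L, ∃ c : k, ⁅u, ⁅u, w⁆⁆ = c • u)
    (vx : x ∈ V)
    (vy : y ∈ V)
    (vz : z ∈ V)
    (vu : u ∈ V)
    (v_xy : ⁅x, y⁆ ∈ V)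
    (v_xz : ⁅x, z⁆ ∈ V)
    (v_xu : ⁅x, u⁆ ∈ V)
    (v_yz : ⁅y, z⁆ ∈ V)
    (v_yu : ⁅y, u⁆ ∈ V)
    (v_zu : ⁅z, u⁆ ∈ V)
    (v_x_yz : ⁅x, ⁅y, z⁆⁆ ∈ V)
    (v_x_yu : ⁅x, ⁅y, u⁆⁆ ∈ V)
    (v_x_zu : ⁅x, ⁅z, u⁆⁆ ∈ V)
    (v_y_xz : ⁅y, ⁅x, z⁆⁆ ∈ V)
    (v_y_xu : ⁅y, ⁅x, u⁆⁆ ∈ V)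
    (v_y_zu : ⁅y, ⁅z, u⁆⁆ ∈ V)
    (v_z_xu : ⁅z, ⁅x, u⁆⁆ ∈ V)
    (v_z_yu : ⁅z, ⁅y, u⁆⁆ ∈ V)
    (v_x_y_zu : ⁅x, ⁅y, ⁅z, u⁆⁆⁆ ∈ V)
    (v_x_z_yu : ⁅x, ⁅z, ⁅y, u⁆⁆⁆ ∈ V)
    (v_y_x_zu : ⁅y, ⁅x, ⁅z, u⁆⁆⁆ ∈ V)
    (v_y_z_xu : ⁅y, ⁅z, ⁅x, u⁆⁆⁆ ∈ V)
    (v_z_x_yu : ⁅z, ⁅x, ⁅y, u⁆⁆⁆ ∈ V)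
    (v_z_y_xu : ⁅z, ⁅y, ⁅x, u⁆⁆⁆ ∈ V)
    (vMx : ⁅x, ⁅y, ⁅z, ⁅x, u⁆⁆⁆⁆ ∈ V)
    (vMy : ⁅y, ⁅x, ⁅z, ⁅y, u⁆⁆⁆⁆ ∈ V)
    (vMz : ⁅z, ⁅x, ⁅y, ⁅z, u⁆⁆⁆⁆ ∈ V)
    (vMu : ⁅u, ⁅x, ⁅y, ⁅z, u⁆⁆⁆⁆ ∈ V)
    : ∀ g ∈ ({x, y, z, u} : Set L), ∀ s ∈ ({x, y, z, u, ⁅x, y⁆, ⁅x, z⁆, ⁅x, u⁆, ⁅y, z⁆, ⁅y, u⁆, ⁅z, u⁆, ⁅x, ⁅y, z⁆⁆, ⁅x, ⁅y, u⁆⁆, ⁅x, ⁅z, u⁆⁆, ⁅y, ⁅x, z⁆⁆, ⁅y, ⁅x, u⁆⁆, ⁅y, ⁅z, u⁆⁆, ⁅z, ⁅x, u⁆⁆, ⁅z, ⁅y, u⁆⁆, ⁅x, ⁅y, ⁅z, u⁆⁆⁆, ⁅x, ⁅z, ⁅y, u⁆⁆⁆, ⁅y, ⁅x, ⁅z, u⁆⁆⁆,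 ⁅y, ⁅z, ⁅x, u⁆⁆⁆, ⁅z, ⁅x, ⁅y, u⁆⁆⁆, ⁅z, ⁅y, ⁅x, u⁆⁆⁆, ⁅x, ⁅y, ⁅z, ⁅x, u⁆⁆⁆⁆, ⁅y, ⁅x, ⁅z, ⁅y, u⁆⁆⁆⁆, ⁅z, ⁅x, ⁅y, ⁅z, u⁆⁆⁆⁆, ⁅u, ⁅x, ⁅y, ⁅z, u⁆⁆⁆⁆} : Set L), ⁅g, s⁆ ∈ V := by
  have d_z_xy : ⁅z, ⁅x, y⁆⁆ ∈ V := by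
    rw [jac3]; exact sub_mem (sw2 v_x_yz) (sw2 v_y_xz)
  have d_u_xy : ⁅u, ⁅x, y⁆⁆ ∈ V := by
    rw [jac3]; exact sub_mem (sw2 v_x_yu) (sw2 v_y_xu)
  have d_u_xz : ⁅u, ⁅x, z⁆⁆ ∈ V := by
    rw [jac3]; exact sub_mem (sw2 v_x_zu) (sw2 v_z_xu)
  have d_u_yz : ⁅u, ⁅y, z⁆⁆ ∈ V := by
    rw [jac3]; exact sub_mem (sw2 v_y_zu) (sw2 v_z_yu)
  have d_u_x_yz : ⁅u, ⁅x, ⁅y, z⁆⁆⁆ ∈ V := by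
    rw [jac3 u x ⁅y, z⁆]
    refine sub_mem ?_ ?_
    · rw [jac3 u y z]
      simp only [lie_sub]
      exact sub_mem (sw3 v_x_y_zu) (sw3 v_x_z_yu)
    · rw [lie_lie]
      exact sub_mem (sw3 v_y_z_xu) (sw3 v_z_y_xu)
  have d_u_y_xz : ⁅u, ⁅y, ⁅x, z⁆⁆⁆ ∈ V := by
    rw [jac3 u y ⁅x, z⁆]
    refine sub_mem ?_ ?_
    · rw [jac3 u x z]
      simp only [lie_sub]
      exact sub_mem (sw3 v_y_x_zu) (sw3 v_y_z_xu)
    · rw [lie_lie]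
      exact sub_mem (sw3 v_x_z_yu) (sw3 v_z_x_yu)
  have T_u_xy_z : ⁅u, ⁅x, ⁅y, ⁅u, z⁆⁆⁆⁆ ∈ V := sw4 vMu
  have T_x_zy_u : ⁅x, ⁅z, ⁅y, ⁅x, u⁆⁆⁆⁆ ∈ V := relA h2 hx vx (sw2 v_x_yz) v_xu vMx
  have T_y_zx_u : ⁅y, ⁅z, ⁅x, ⁅y, u⁆⁆⁆⁆ ∈ V := relA h2 hy vy (sw2 v_y_xz) v_yu vMy
  have T_z_yx_u : ⁅z, ⁅y, ⁅x, ⁅z, u⁆⁆⁆⁆ ∈ V := relA h2 hz vz (sw2 d_z_xy) v_zu vMz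
  have T_u_yx_z : ⁅u, ⁅y, ⁅x, ⁅u, z⁆⁆⁆⁆ ∈ V := relA h2 hu vu (sw2 d_u_xy) (sw1 v_zu) T_u_xy_z
  have T_u_xz_y : ⁅u, ⁅x, ⁅z, ⁅u, y⁆⁆⁆⁆ ∈ V := relB h2 hu vu (sw1 v_xu) (sw2 d_u_yz) T_u_xy_z
  have T_u_zx_y : ⁅u, ⁅z, ⁅x, ⁅u, y⁆⁆⁆⁆ ∈ V := relA h2 hu vu (sw2 d_u_xz) (sw1 v_yu) T_u_xz_y
  have T_u_yz_x : ⁅u, ⁅y, ⁅z, ⁅u, x⁆⁆⁆⁆ ∈ V := relB h2 hu vu (sw1 v_yu) (sw2 d_u_xz) T_u_yx_z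
  have T_u_zy_x : ⁅u, ⁅z, ⁅y, ⁅u, x⁆⁆⁆⁆ ∈ V := relA h2 hu vu (sw2 d_u_yz) (sw1 v_xu) T_u_yz_x
  have e6_zMx : ⁅z, ⁅x, ⁅y, ⁅z, ⁅x, u⁆⁆⁆⁆⁆ ∈ V := by
    refine relB h2 hz vz (sw1 v_xz) v_z_y_xu ?_
    rw [lie_lie x u ⁅z, y⁆]
    simp only [lie_sub]
    exact sub_mem (ext_lie_mem hx z (sw1 v_xz) _)
      (l2_lie_mem h2 hx z (sw1 v_xz) v_z_xu (l2_mem h2 hz vz (sw1 v_xz) (sw1 v_yz)))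
  have e6_zMy : ⁅z, ⁅y, ⁅x, ⁅z, ⁅y, u⁆⁆⁆⁆⁆ ∈ V := by
    refine relB h2 hz vz (sw1 v_yz) v_z_x_yu ?_
    rw [lie_lie y u ⁅z, x⁆]
    simp only [lie_sub]
    exact sub_mem (ext_lie_mem hy z (sw1 v_yz) _)
      (l2_lie_mem h2 hy z (sw1 v_yz) v_z_yu (l2_mem h2 hz vz (sw1 v_yz) (sw1 v_xz)))
  have e6_yMz : ⁅y, ⁅z, ⁅x, ⁅y, ⁅z, u⁆⁆⁆⁆⁆ ∈ V := by
    refine relB h2 hy vy v_yz v_y_x_zu ?_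
    rw [lie_lie z u ⁅y, x⁆]
    simp only [lie_sub]
    exact sub_mem (ext_lie_mem hz y v_yz _)
      (l2_lie_mem h2 hz y v_yz v_y_zu (l2_mem h2 hy vy v_yz (sw1 v_xy)))
  have e6_yMu : ⁅y, ⁅u, ⁅x, ⁅y, ⁅z, u⁆⁆⁆⁆⁆ ∈ V := by
    refine relB h2 hy vy v_yu v_y_x_zu ?_
    rw [lie_lie z u ⁅y, x⁆]
    simp only [lie_sub]
    refine sub_mem ?_ (ext_lie_mem hu y v_yu _)
    exact l2_lie_mem h2 hu y v_yu (sw2 v_y_zu) (l2_mem h2 hy vy v_yu (sw1 v_xy))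
  have e6_zMu : ⁅z, ⁅u, ⁅x, ⁅y, ⁅z, u⁆⁆⁆⁆⁆ ∈ V := by
    rw [jac3 y z u]
    simp only [lie_sub]
    refine sub_mem ?_ ?_
    · refine relB h2 hz vz v_zu v_z_x_yu ?_
      rw [lie_lie y u ⁅z, x⁆]
      simp only [lie_sub]
      exact sub_mem
        (l2_lie_mem h2 hu z v_zu (sw2 v_z_yu) (l2_mem h2 hz vz v_zu (sw1 v_xz)))
        (ext_lie_mem hu z v_zu _)
    · exact l2_lie_mem h2 hu z v_zu (sw2 v_z_xu) (sw3 (l2_mem h2 hz vz v_zu (sw1 v_yz)))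
  have e6_uMx : ⁅u, ⁅x, ⁅y, ⁅z, ⁅x, u⁆⁆⁆⁆⁆ ∈ V := by
    rw [jac3 z x u]
    simp only [lie_sub]
    refine sub_mem ?_ ?_
    · exact l2_lie_mem h2 hx u (sw1 v_xu) d_u_xy
        (sw3 (l2_mem h2 hu vu (sw1 v_xu) (sw1 v_zu)))
    · refine relB h2 hu vu (sw1 v_xu) (sw3 d_u_y_xz) ?_
      rw [lie_lie z x ⁅u, y⁆]
      simp only [lie_sub]
      exact sub_mem
        (l2_lie_mem h2 hx u (sw1 v_xu) d_u_xz (l2_mem h2 hu vu (sw1 v_xu) (sw1 v_yu)))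
        (ext_lie_mem hx u (sw1 v_xu) _)
  have e6_uMy : ⁅u, ⁅y, ⁅x, ⁅z, ⁅y, u⁆⁆⁆⁆⁆ ∈ V := by
    rw [jac3 z y u]
    simp only [lie_sub]
    refine sub_mem ?_ ?_
    · exact l2_lie_mem h2 hy u (sw1 v_yu) (sw2 d_u_xy)
        (sw3 (l2_mem h2 hu vu (sw1 v_yu) (sw1 v_zu)))
    · refine relB h2 hu vu (sw1 v_yu) (sw3 d_u_x_yz) ?_
      rw [lie_lie z y ⁅u, x⁆]
      simp only [lie_sub]
      exact sub_mem
        (l2_lie_mem h2 hy u (sw1 v_yu) d_u_yz (l2_mem h2 hu vu (sw1 v_yu) (sw1 v_xu)))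
        (ext_lie_mem hy u (sw1 v_yu) _)
  have e6_uMz : ⁅u, ⁅z, ⁅x, ⁅y, ⁅z, u⁆⁆⁆⁆⁆ ∈ V := by
    rw [jac3 y z u]
    simp only [lie_sub]
    refine sub_mem ?_ ?_
    · exact l2_lie_mem h2 hz u (sw1 v_zu) (sw2 d_u_xz)
        (sw3 (l2_mem h2 hu vu (sw1 v_zu) (sw1 v_yu)))
    · refine relB h2 hu vu (sw1 v_zu) d_u_x_yz ?_
      rw [lie_lie y z ⁅u, x⁆]
      simp only [lie_sub]
      exact sub_mem
        (l2_lie_mem h2 hz u (sw1 v_zu) (sw2 d_u_yz) (l2_mem h2 hu vu (sw1 v_zu) (sw1 v_xu)))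
        (ext_lie_mem hz u (sw1 v_zu) _)
  intro g hg s hs
  simp only [Set.mem_insert_iff, Set.mem_singleton_iff] at hg hs
  rcases hg with rfl | rfl | rfl | rfl
  · rcases hs with rfl | rfl | rfl | rfl | rfl | rfl | rfl | rfl | rfl | rfl | rfl | rfl | rfl | rfl | rfl | rfl | rfl | rfl | rfl | rfl | rfl | rfl | rfl | rfl | rfl | rfl | rfl | rfl
    · rw [lie_self]; exact zero_mem V
    · exact v_xy
    · exact v_xz
    · exact v_xu
    · exact ext_mem hx vx y
    · exact ext_mem hx vx z
    · exact ext_mem hx vx u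
    · exact v_x_yz
    · exact v_x_yu
    · exact v_x_zu
    · exact ext_mem hx vx _
    · exact ext_mem hx vx _
    · exact ext_mem hx vx _
    · exact l2_mem h2 hx vx v_xy v_xz
    · exact l2_mem h2 hx vx v_xy v_xu
    · exact v_x_y_zu
    · exact l2_mem h2 hx vx v_xz v_xu
    · exact v_x_z_yu
    · exact ext_mem hx vx _
    · exact ext_mem hx vx _
    · exact l2_mem h2 hx vx v_xy v_x_zu
    · exact vMx
    · exact l2_mem h2 hx vx v_xz v_x_yu
    · exact T_x_zy_u
    · exact ext_mem hx vx _
    · exact l2_mem h2 hx vx v_xy v_x_z_yu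
    · exact l2_mem h2 hx vx v_xz v_x_y_zu
    · exact l2_mem h2 hx vx v_xu v_x_y_zu
  · rcases hs with rfl | rfl | rfl | rfl | rfl | rfl | rfl | rfl | rfl | rfl | rfl | rfl | rfl | rfl | rfl | rfl | rfl | rfl | rfl | rfl | rfl | rfl | rfl | rfl | rfl | rfl | rfl | rfl
    · exact sw1 v_xy
    · rw [lie_self]; exact zero_mem V
    · exact v_yz
    · exact v_yu
    · exact sw2 (ext_mem hy vy x)
    · exact v_y_xz
    · exact v_y_xu
    · exact ext_mem hy vy z
    · exact ext_mem hy vy u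
    · exact v_y_zu
    · exact l2_mem h2 hy vy (sw1 v_xy) v_yz
    · exact l2_mem h2 hy vy (sw1 v_xy) v_yu
    · exact v_y_x_zu
    · exact ext_mem hy vy _
    · exact ext_mem hy vy _
    · exact ext_mem hy vy _
    · exact v_y_z_xu
    · exact l2_mem h2 hy vy v_yz v_yu
    · exact l2_mem h2 hy vy (sw1 v_xy) v_y_zu
    · exact vMy
    · exact ext_mem hy vy _
    · exact ext_mem hy vy _
    · exact T_y_zx_u
    · exact l2_mem h2 hy vy v_yz v_y_xu
    · exact l2_mem h2 hy vy (sw1 v_xy) v_y_z_xu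
    · exact ext_mem hy vy _
    · exact e6_yMz
    · exact e6_yMu
  · rcases hs with rfl | rfl | rfl | rfl | rfl | rfl | rfl | rfl | rfl | rfl | rfl | rfl | rfl | rfl | rfl | rfl | rfl | rfl | rfl | rfl | rfl | rfl | rfl | rfl | rfl | rfl | rfl | rfl
    · exact sw1 v_xz
    · exact sw1 v_yz
    · rw [lie_self]; exact zero_mem V
    · exact v_zu
    · exact d_z_xy
    · exact sw2 (ext_mem hz vz x)
    · exact v_z_xu
    · exact sw2 (ext_mem hz vz y)
    · exact v_z_yu
    · exact ext_mem hz vz u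
    · exact sw3 (l2_mem h2 hz vz (sw1 v_xz) (sw1 v_yz))
    · exact v_z_x_yu
    · exact l2_mem h2 hz vz (sw1 v_xz) v_zu
    · exact sw3 (l2_mem h2 hz vz (sw1 v_yz) (sw1 v_xz))
    · exact v_z_y_xu
    · exact l2_mem h2 hz vz (sw1 v_yz) v_zu
    · exact ext_mem hz vz _
    · exact ext_mem hz vz _
    · exact vMz
    · exact l2_mem h2 hz vz (sw1 v_xz) v_z_yu
    · exact T_z_yx_u
    · exact l2_mem h2 hz vz (sw1 v_yz) v_z_xu
    · exact ext_mem hz vz _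
    · exact ext_mem hz vz _
    · exact e6_zMx
    · exact e6_zMy
    · exact ext_mem hz vz _
    · exact e6_zMu
  · rcases hs with rfl | rfl | rfl | rfl | rfl | rfl | rfl | rfl | rfl | rfl | rfl | rfl | rfl | rfl | rfl | rfl | rfl | rfl | rfl | rfl | rfl | rfl | rfl | rfl | rfl | rfl | rfl | rfl
    · exact sw1 v_xu
    · exact sw1 v_yu
    · exact sw1 v_zu
    · rw [lie_self]; exact zero_mem V
    · exact d_u_xy
    · exact d_u_xz
    · exact sw2 (ext_mem hu vu x)
    · exact d_u_yz
    · exact sw2 (ext_mem hu vu y)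
    · exact sw2 (ext_mem hu vu z)
    · exact d_u_x_yz
    · exact sw3 (l2_mem h2 hu vu (sw1 v_xu) (sw1 v_yu))
    · exact sw3 (l2_mem h2 hu vu (sw1 v_xu) (sw1 v_zu))
    · exact d_u_y_xz
    · exact sw3 (l2_mem h2 hu vu (sw1 v_yu) (sw1 v_xu))
    · exact sw3 (l2_mem h2 hu vu (sw1 v_yu) (sw1 v_zu))
    · exact sw3 (l2_mem h2 hu vu (sw1 v_zu) (sw1 v_xu))
    · exact sw3 (l2_mem h2 hu vu (sw1 v_zu) (sw1 v_yu))
    · exact vMu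
    · exact sw4 T_u_xz_y
    · exact sw4 T_u_yx_z
    · exact sw4 T_u_yz_x
    · exact sw4 T_u_zx_y
    · exact sw4 T_u_zy_x
    · exact e6_uMx
    · exact e6_uMy
    · exact e6_uMz
    · exact ext_mem hu vu _

end FourExt

/-- Proposition 6.3: a Lie algebra generated by four extremal elements `x, y, z, u` is
linearly spanned by 28 explicit monomials; in particular `dim L ≤ 28`. -/
theorem four_extremal_generators_span {k L : Type*} [Field k] [LieRing L] [LieAlgebra k L]
    (hchar : (2 : k) ≠ 0) (x y z u : L)
    (hx : ∀ w : L, ∃ c : k, ⁅x, ⁅x, w⁆⁆ = c • x)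
    (hy : ∀ w : L, ∃ c : k, ⁅y, ⁅y, w⁆⁆ = c • y)
    (hz : ∀ w : L, ∃ c : k, ⁅z, ⁅z, w⁆⁆ = c • z)
    (hu : ∀ w : L, ∃ c : k, ⁅u, ⁅u, w⁆⁆ = c • u)
    (hgen : LieSubalgebra.lieSpan k L {x, y, z, u} = ⊤) :
    Submodule.span k
      ({x, y, z, u,
        ⁅x, y⁆, ⁅x, z⁆, ⁅x, u⁆, ⁅y, z⁆, ⁅y, u⁆, ⁅z, u⁆,
        ⁅x, ⁅y, z⁆⁆, ⁅x, ⁅y, u⁆⁆, ⁅x, ⁅z, u⁆⁆, ⁅y, ⁅x, z⁆⁆, ⁅y, ⁅x, u⁆⁆,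
        ⁅y, ⁅z, u⁆⁆, ⁅z, ⁅x, u⁆⁆, ⁅z, ⁅y, u⁆⁆,
        ⁅x, ⁅y, ⁅z, u⁆⁆⁆, ⁅x, ⁅z, ⁅y, u⁆⁆⁆, ⁅y, ⁅x, ⁅z, u⁆⁆⁆,
        ⁅y, ⁅z, ⁅x, u⁆⁆⁆, ⁅z, ⁅x, ⁅y, u⁆⁆⁆, ⁅z, ⁅y, ⁅x, u⁆⁆⁆,
        ⁅x, ⁅y, ⁅z, ⁅x, u⁆⁆⁆⁆, ⁅y, ⁅x, ⁅z, ⁅y, u⁆⁆⁆⁆,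
        ⁅z, ⁅x, ⁅y, ⁅z, u⁆⁆⁆⁆, ⁅u, ⁅x, ⁅y, ⁅z, u⁆⁆⁆⁆} : Set L) = ⊤ ∧
      Module.rank k L ≤ 28 := by
  classical
  set S : Set L := ({x, y, z, u, ⁅x, y⁆, ⁅x, z⁆, ⁅x, u⁆, ⁅y, z⁆, ⁅y, u⁆, ⁅z, u⁆, ⁅x, ⁅y, z⁆⁆, ⁅x, ⁅y, u⁆⁆, ⁅x, ⁅z, u⁆⁆, ⁅y, ⁅x, z⁆⁆, ⁅y, ⁅x, u⁆⁆, ⁅y, ⁅z, u⁆⁆, ⁅z, ⁅x, u⁆⁆, ⁅z, ⁅y, u⁆⁆, ⁅x, ⁅y, ⁅z, u⁆⁆⁆, ⁅x, ⁅z, ⁅y, u⁆⁆⁆, ⁅y, ⁅x, ⁅z, u⁆⁆⁆, ⁅y, ⁅z, ⁅x, u⁆⁆⁆, ⁅z, ⁅x, ⁅y, u⁆⁆⁆, ⁅z, ⁅y, ⁅x, u⁆⁆⁆, ⁅x, ⁅y, ⁅z, ⁅x, u⁆⁆⁆⁆, ⁅y, ⁅x, ⁅z, ⁅y, u⁆⁆⁆⁆,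 ⁅z, ⁅x, ⁅y, ⁅z, u⁆⁆⁆⁆, ⁅u, ⁅x, ⁅y, ⁅z, u⁆⁆⁆⁆} : Set L) with hSdef
  set V : Submodule k L := Submodule.span k S with hVdef
  have vx : x ∈ V := Submodule.subset_span (Set.mem_insert _ _)
  have vy : y ∈ V := Submodule.subset_span (Set.mem_insert_of_mem _ (Set.mem_insert _ _))
  have vz : z ∈ V := Submodule.subset_span (Set.mem_insert_of_mem _ (Set.mem_insert_of_mem _ (Set.mem_insert _ _)))
  have vu : u ∈ V := Submodule.subset_span (Set.mem_insert_of_mem _ (Set.mem_insert_of_mem _ (Set.mem_insert_of_mem _ (Set.mem_insert _ _))))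
  have v_xy : ⁅x, y⁆ ∈ V := Submodule.subset_span (Set.mem_insert_of_mem _ (Set.mem_insert_of_mem _ (Set.mem_insert_of_mem _ (Set.mem_insert_of_mem _ (Set.mem_insert _ _)))))
  have v_xz : ⁅x, z⁆ ∈ V := Submodule.subset_span (Set.mem_insert_of_mem _ (Set.mem_insert_of_mem _ (Set.mem_insert_of_mem _ (Set.mem_insert_of_mem _ (Set.mem_insert_of_mem _ (Set.mem_insert _ _))))))
  have v_xu : ⁅x, u⁆ ∈ V := Submodule.subset_span (Set.mem_insert_of_mem _ (Set.mem_insert_of_mem _ (Set.mem_insert_of_mem _ (Set.mem_insert_of_mem _ (Set.mem_insert_of_mem _ (Set.mem_insert_of_mem _ (Set.mem_insert _ _)))))))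
  have v_yz : ⁅y, z⁆ ∈ V := Submodule.subset_span (Set.mem_insert_of_mem _ (Set.mem_insert_of_mem _ (Set.mem_insert_of_mem _ (Set.mem_insert_of_mem _ (Set.mem_insert_of_mem _ (Set.mem_insert_of_mem _ (Set.mem_insert_of_mem _ (Set.mem_insert _ _))))))))
  have v_yu : ⁅y, u⁆ ∈ V := Submodule.subset_span (Set.mem_insert_of_mem _ (Set.mem_insert_of_mem _ (Set.mem_insert_of_mem _ (Set.mem_insert_of_mem _ (Set.mem_insert_of_mem _ (Set.mem_insert_of_mem _ (Set.mem_insert_of_mem _ (Set.mem_insert_of_mem _ (Set.mem_insert _ _)))))))))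
  have v_zu : ⁅z, u⁆ ∈ V := Submodule.subset_span (Set.mem_insert_of_mem _ (Set.mem_insert_of_mem _ (Set.mem_insert_of_mem _ (Set.mem_insert_of_mem _ (Set.mem_insert_of_mem _ (Set.mem_insert_of_mem _ (Set.mem_insert_of_mem _ (Set.mem_insert_of_mem _ (Set.mem_insert_of_mem _ (Set.mem_insert _ _))))))))))
  have v_x_yz : ⁅x, ⁅y, z⁆⁆ ∈ V := Submodule.subset_span (Set.mem_insert_of_mem _ (Set.mem_insert_of_mem _ (Set.mem_insert_of_mem _ (Set.mem_insert_of_mem _ (Set.mem_insert_of_mem _ (Set.mem_insert_of_mem _ (Set.mem_insert_of_mem _ (Set.mem_insert_of_mem _ (Set.mem_insert_of_mem _ (Set.mem_insert_of_mem _ (Set.mem_insert _ _)))))))))))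
  have v_x_yu : ⁅x, ⁅y, u⁆⁆ ∈ V := Submodule.subset_span (Set.mem_insert_of_mem _ (Set.mem_insert_of_mem _ (Set.mem_insert_of_mem _ (Set.mem_insert_of_mem _ (Set.mem_insert_of_mem _ (Set.mem_insert_of_mem _ (Set.mem_insert_of_mem _ (Set.mem_insert_of_mem _ (Set.mem_insert_of_mem _ (Set.mem_insert_of_mem _ (Set.mem_insert_of_mem _ (Set.mem_insert _ _))))))))))))
  have v_x_zu : ⁅x, ⁅z, u⁆⁆ ∈ V := Submodule.subset_span (Set.mem_insert_of_mem _ (Set.mem_insert_of_mem _ (Set.mem_insert_of_mem _ (Set.mem_insert_of_mem _ (Set.mem_insert_of_mem _ (Set.mem_insert_of_mem _ (Set.mem_insert_of_mem _ (Set.mem_insert_of_mem _ (Set.mem_insert_of_mem _ (Set.mem_insert_of_mem _ (Set.mem_insert_of_mem _ (Set.mem_insert_of_mem _ (Set.mem_insert _ _)))))))))))))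
  have v_y_xz : ⁅y, ⁅x, z⁆⁆ ∈ V := Submodule.subset_span (Set.mem_insert_of_mem _ (Set.mem_insert_of_mem _ (Set.mem_insert_of_mem _ (Set.mem_insert_of_mem _ (Set.mem_insert_of_mem _ (Set.mem_insert_of_mem _ (Set.mem_insert_of_mem _ (Set.mem_insert_of_mem _ (Set.mem_insert_of_mem _ (Set.mem_insert_of_mem _ (Set.mem_insert_of_mem _ (Set.mem_insert_of_mem _ (Set.mem_insert_of_mem _ (Set.mem_insert _ _))))))))))))))
  have v_y_xu : ⁅y, ⁅x, u⁆⁆ ∈ V := Submodule.subset_span (Set.mem_insert_of_mem _ (Set.mem_insert_of_mem _ (Set.mem_insert_of_mem _ (Set.mem_insert_of_mem _ (Set.mem_insert_of_mem _ (Set.mem_insert_of_mem _ (Set.mem_insert_of_mem _ (Set.mem_insert_of_mem _ (Set.mem_insert_of_mem _ (Set.mem_insert_of_mem _ (Set.mem_insert_of_mem _ (Set.mem_insert_of_mem _ (Set.mem_insert_of_mem _ (Set.mem_insert_of_mem _ (Set.mem_insert _ _)))))))))))))))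
  have v_y_zu : ⁅y, ⁅z, u⁆⁆ ∈ V := Submodule.subset_span (Set.mem_insert_of_mem _ (Set.mem_insert_of_mem _ (Set.mem_insert_of_mem _ (Set.mem_insert_of_mem _ (Set.mem_insert_of_mem _ (Set.mem_insert_of_mem _ (Set.mem_insert_of_mem _ (Set.mem_insert_of_mem _ (Set.mem_insert_of_mem _ (Set.mem_insert_of_mem _ (Set.mem_insert_of_mem _ (Set.mem_insert_of_mem _ (Set.mem_insert_of_mem _ (Set.mem_insert_of_mem _ (Set.mem_insert_of_mem _ (Set.mem_insert _ _))))))))))))))))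
  have v_z_xu : ⁅z, ⁅x, u⁆⁆ ∈ V := Submodule.subset_span (Set.mem_insert_of_mem _ (Set.mem_insert_of_mem _ (Set.mem_insert_of_mem _ (Set.mem_insert_of_mem _ (Set.mem_insert_of_mem _ (Set.mem_insert_of_mem _ (Set.mem_insert_of_mem _ (Set.mem_insert_of_mem _ (Set.mem_insert_of_mem _ (Set.mem_insert_of_mem _ (Set.mem_insert_of_mem _ (Set.mem_insert_of_mem _ (Set.mem_insert_of_mem _ (Set.mem_insert_of_mem _ (Set.mem_insert_of_mem _ (Set.mem_insert_of_mem _ (Set.mem_insert _ _)))))))))))))))))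
  have v_z_yu : ⁅z, ⁅y, u⁆⁆ ∈ V := Submodule.subset_span (Set.mem_insert_of_mem _ (Set.mem_insert_of_mem _ (Set.mem_insert_of_mem _ (Set.mem_insert_of_mem _ (Set.mem_insert_of_mem _ (Set.mem_insert_of_mem _ (Set.mem_insert_of_mem _ (Set.mem_insert_of_mem _ (Set.mem_insert_of_mem _ (Set.mem_insert_of_mem _ (Set.mem_insert_of_mem _ (Set.mem_insert_of_mem _ (Set.mem_insert_of_mem _ (Set.mem_insert_of_mem _ (Set.mem_insert_of_mem _ (Set.mem_insert_of_mem _ (Set.mem_insert_of_mem _ (Set.mem_insert _ _))))))))))))))))))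
  have v_x_y_zu : ⁅x, ⁅y, ⁅z, u⁆⁆⁆ ∈ V := Submodule.subset_span (Set.mem_insert_of_mem _ (Set.mem_insert_of_mem _ (Set.mem_insert_of_mem _ (Set.mem_insert_of_mem _ (Set.mem_insert_of_mem _ (Set.mem_insert_of_mem _ (Set.mem_insert_of_mem _ (Set.mem_insert_of_mem _ (Set.mem_insert_of_mem _ (Set.mem_insert_of_mem _ (Set.mem_insert_of_mem _ (Set.mem_insert_of_mem _ (Set.mem_insert_of_mem _ (Set.mem_insert_of_mem _ (Set.mem_insert_of_mem _ (Set.mem_insert_of_mem _ (Set.mem_insert_of_mem _ (Set.mem_insert_of_mem _ (Set.mem_insert _ _)))))))))))))))))))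
  have v_x_z_yu : ⁅x, ⁅z, ⁅y, u⁆⁆⁆ ∈ V := Submodule.subset_span (Set.mem_insert_of_mem _ (Set.mem_insert_of_mem _ (Set.mem_insert_of_mem _ (Set.mem_insert_of_mem _ (Set.mem_insert_of_mem _ (Set.mem_insert_of_mem _ (Set.mem_insert_of_mem _ (Set.mem_insert_of_mem _ (Set.mem_insert_of_mem _ (Set.mem_insert_of_mem _ (Set.mem_insert_of_mem _ (Set.mem_insert_of_mem _ (Set.mem_insert_of_mem _ (Set.mem_insert_of_mem _ (Set.mem_insert_of_mem _ (Set.mem_insert_of_mem _ (Set.mem_insert_of_mem _ (Set.mem_insert_of_mem _ (Set.mem_insert_of_mem _ (Set.mem_insert _ _))))))))))))))))))))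
  have v_y_x_zu : ⁅y, ⁅x, ⁅z, u⁆⁆⁆ ∈ V := Submodule.subset_span (Set.mem_insert_of_mem _ (Set.mem_insert_of_mem _ (Set.mem_insert_of_mem _ (Set.mem_insert_of_mem _ (Set.mem_insert_of_mem _ (Set.mem_insert_of_mem _ (Set.mem_insert_of_mem _ (Set.mem_insert_of_mem _ (Set.mem_insert_of_mem _ (Set.mem_insert_of_mem _ (Set.mem_insert_of_mem _ (Set.mem_insert_of_mem _ (Set.mem_insert_of_mem _ (Set.mem_insert_of_mem _ (Set.mem_insert_of_mem _ (Set.mem_insert_of_mem _ (Set.mem_insert_of_mem _ (Set.mem_insert_of_mem _ (Set.mem_insert_of_mem _ (Set.mem_insert_of_mem _ (Set.mem_insert _ _)))))))))))))))))))))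
  have v_y_z_xu : ⁅y, ⁅z, ⁅x, u⁆⁆⁆ ∈ V := Submodule.subset_span (Set.mem_insert_of_mem _ (Set.mem_insert_of_mem _ (Set.mem_insert_of_mem _ (Set.mem_insert_of_mem _ (Set.mem_insert_of_mem _ (Set.mem_insert_of_mem _ (Set.mem_insert_of_mem _ (Set.mem_insert_of_mem _ (Set.mem_insert_of_mem _ (Set.mem_insert_of_mem _ (Set.mem_insert_of_mem _ (Set.mem_insert_of_mem _ (Set.mem_insert_of_mem _ (Set.mem_insert_of_mem _ (Set.mem_insert_of_mem _ (Set.mem_insert_of_mem _ (Set.mem_insert_of_mem _ (Set.mem_insert_of_mem _ (Set.mem_insert_of_mem _ (Set.mem_insert_of_mem _ (Set.mem_insert_of_mem _ (Set.mem_insert _ _))))))))))))))))))))))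
  have v_z_x_yu : ⁅z, ⁅x, ⁅y, u⁆⁆⁆ ∈ V := Submodule.subset_span (Set.mem_insert_of_mem _ (Set.mem_insert_of_mem _ (Set.mem_insert_of_mem _ (Set.mem_insert_of_mem _ (Set.mem_insert_of_mem _ (Set.mem_insert_of_mem _ (Set.mem_insert_of_mem _ (Set.mem_insert_of_mem _ (Set.mem_insert_of_mem _ (Set.mem_insert_of_mem _ (Set.mem_insert_of_mem _ (Set.mem_insert_of_mem _ (Set.mem_insert_of_mem _ (Set.mem_insert_of_mem _ (Set.mem_insert_of_mem _ (Set.mem_insert_of_mem _ (Set.mem_insert_of_mem _ (Set.mem_insert_of_mem _ (Set.mem_insert_of_mem _ (Set.mem_insert_of_mem _ (Set.mem_insert_of_mem _ (Set.mem_insert_of_mem _ (Set.mem_insert _ _)))))))))))))))))))))))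
  have v_z_y_xu : ⁅z, ⁅y, ⁅x, u⁆⁆⁆ ∈ V := Submodule.subset_span (Set.mem_insert_of_mem _ (Set.mem_insert_of_mem _ (Set.mem_insert_of_mem _ (Set.mem_insert_of_mem _ (Set.mem_insert_of_mem _ (Set.mem_insert_of_mem _ (Set.mem_insert_of_mem _ (Set.mem_insert_of_mem _ (Set.mem_insert_of_mem _ (Set.mem_insert_of_mem _ (Set.mem_insert_of_mem _ (Set.mem_insert_of_mem _ (Set.mem_insert_of_mem _ (Set.mem_insert_of_mem _ (Set.mem_insert_of_mem _ (Set.mem_insert_of_mem _ (Set.mem_insert_of_mem _ (Set.mem_insert_of_mem _ (Set.mem_insert_of_mem _ (Set.mem_insert_of_mem _ (Set.mem_insert_of_mem _ (Set.mem_insert_of_mem _ (Set.mem_insert_of_mem _ (Set.mem_insert _ _))))))))))))))))))))))))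
  have vMx : ⁅x, ⁅y, ⁅z, ⁅x, u⁆⁆⁆⁆ ∈ V := Submodule.subset_span (Set.mem_insert_of_mem _ (Set.mem_insert_of_mem _ (Set.mem_insert_of_mem _ (Set.mem_insert_of_mem _ (Set.mem_insert_of_mem _ (Set.mem_insert_of_mem _ (Set.mem_insert_of_mem _ (Set.mem_insert_of_mem _ (Set.mem_insert_of_mem _ (Set.mem_insert_of_mem _ (Set.mem_insert_of_mem _ (Set.mem_insert_of_mem _ (Set.mem_insert_of_mem _ (Set.mem_insert_of_mem _ (Set.mem_insert_of_mem _ (Set.mem_insert_of_mem _ (Set.mem_insert_of_mem _ (Set.mem_insert_of_mem _ (Set.mem_insert_of_mem _ (Set.mem_insert_of_mem _ (Set.mem_insert_of_mem _ (Set.mem_insert_of_mem _ (Set.mem_insert_of_mem _ (Set.mem_insert_of_mem _ (Set.mem_insert _ _)))))))))))))))))))))))))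
  have vMy : ⁅y, ⁅x, ⁅z, ⁅y, u⁆⁆⁆⁆ ∈ V := Submodule.subset_span (Set.mem_insert_of_mem _ (Set.mem_insert_of_mem _ (Set.mem_insert_of_mem _ (Set.mem_insert_of_mem _ (Set.mem_insert_of_mem _ (Set.mem_insert_of_mem _ (Set.mem_insert_of_mem _ (Set.mem_insert_of_mem _ (Set.mem_insert_of_mem _ (Set.mem_insert_of_mem _ (Set.mem_insert_of_mem _ (Set.mem_insert_of_mem _ (Set.mem_insert_of_mem _ (Set.mem_insert_of_mem _ (Set.mem_insert_of_mem _ (Set.mem_insert_of_mem _ (Set.mem_insert_of_mem _ (Set.mem_insert_of_mem _ (Set.mem_insert_of_mem _ (Set.mem_insert_of_mem _ (Set.mem_insert_of_mem _ (Set.mem_insert_of_mem _ (Set.mem_insert_of_mem _ (Set.mem_insert_of_mem _ (Set.mem_insert_of_mem _ (Set.mem_insert _ _))))))))))))))))))))))))))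
  have vMz : ⁅z, ⁅x, ⁅y, ⁅z, u⁆⁆⁆⁆ ∈ V := Submodule.subset_span (Set.mem_insert_of_mem _ (Set.mem_insert_of_mem _ (Set.mem_insert_of_mem _ (Set.mem_insert_of_mem _ (Set.mem_insert_of_mem _ (Set.mem_insert_of_mem _ (Set.mem_insert_of_mem _ (Set.mem_insert_of_mem _ (Set.mem_insert_of_mem _ (Set.mem_insert_of_mem _ (Set.mem_insert_of_mem _ (Set.mem_insert_of_mem _ (Set.mem_insert_of_mem _ (Set.mem_insert_of_mem _ (Set.mem_insert_of_mem _ (Set.mem_insert_of_mem _ (Set.mem_insert_of_mem _ (Set.mem_insert_of_mem _ (Set.mem_insert_of_mem _ (Set.mem_insert_of_mem _ (Set.mem_insert_of_mem _ (Set.mem_insert_of_mem _ (Set.mem_insert_of_mem _ (Set.mem_insert_of_mem _ (Set.mem_insert_of_mem _ (Set.mem_insert_of_mem _ (Set.mem_insert _ _)))))))))))))))))))))))))))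
  have vMu : ⁅u, ⁅x, ⁅y, ⁅z, u⁆⁆⁆⁆ ∈ V := Submodule.subset_span (Set.mem_insert_of_mem _ (Set.mem_insert_of_mem _ (Set.mem_insert_of_mem _ (Set.mem_insert_of_mem _ (Set.mem_insert_of_mem _ (Set.mem_insert_of_mem _ (Set.mem_insert_of_mem _ (Set.mem_insert_of_mem _ (Set.mem_insert_of_mem _ (Set.mem_insert_of_mem _ (Set.mem_insert_of_mem _ (Set.mem_insert_of_mem _ (Set.mem_insert_of_mem _ (Set.mem_insert_of_mem _ (Set.mem_insert_of_mem _ (Set.mem_insert_of_mem _ (Set.mem_insert_of_mem _ (Set.mem_insert_of_mem _ (Set.mem_insert_of_mem _ (Set.mem_insert_of_mem _ (Set.mem_insert_of_mem _ (Set.mem_insert_of_mem _ (Set.mem_insert_of_mem _ (Set.mem_insert_of_mem _ (Set.mem_insert_of_mem _ (Set.mem_insert_of_mem _ (Set.mem_insert_of_mem _ (Set.mem_singleton _))))))))))))))))))))))))))))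
  have hstab := FourExt.bracket_stable hchar hx hy hz hu vx vy vz vu v_xy v_xz v_xu v_yz v_yu v_zu v_x_yz v_x_yu v_x_zu v_y_xz v_y_xu v_y_zu v_z_xu v_z_yu v_x_y_zu v_x_z_yu v_y_x_zu v_y_z_xu v_z_x_yu v_z_y_xu vMx vMy vMz vMu
  have hgV : ∀ g ∈ ({x, y, z, u} : Set L), ∀ v ∈ V, ⁅g, v⁆ ∈ V := by
    intro g hg v hv
    rw [hVdef] at hv
    induction hv using Submodule.span_induction with
    | mem s hs => exact hstab g hg s hs
    | zero => rw [lie_zero]; exact zero_mem V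
    | add a b ha hb iha ihb => rw [lie_add]; exact add_mem iha ihb
    | smul t a ha iha => rw [lie_smul]; exact V.smul_mem t iha
  let W : LieSubalgebra k L :=
    { carrier := {w : L | ∀ v ∈ V, ⁅w, v⁆ ∈ V}
      add_mem' := fun {p q} hp hq v hv => by
        rw [add_lie]; exact add_mem (hp v hv) (hq v hv)
      zero_mem' := fun v hv => by rw [zero_lie]; exact zero_mem V
      smul_mem' := fun t p hp v hv => by rw [smul_lie]; exact V.smul_mem t (hp v hv)
      lie_mem' := fun {p q} hp hq v hv => by
        rw [lie_lie]; exact sub_mem (hp _ (hq v hv)) (hq _ (hp v hv)) }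
  have hWmem : ∀ p : L, p ∈ W ↔ ∀ v ∈ V, ⁅p, v⁆ ∈ V := fun p => Iff.rfl
  have hle : LieSubalgebra.lieSpan k L {x, y, z, u} ≤ W := by
    rw [LieSubalgebra.lieSpan_le]
    intro g hg
    exact (hWmem g).mpr (hgV g hg)
  have hall : ∀ l : L, ∀ v ∈ V, ⁅l, v⁆ ∈ V := by
    intro l
    have hl : l ∈ LieSubalgebra.lieSpan k L {x, y, z, u} := by
      rw [hgen]; exact LieSubalgebra.mem_top l
    exact (hWmem l).mp (hle hl)
  let V' : LieSubalgebra k L :=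
    { toSubmodule := V
      lie_mem' := fun {p q} hp hq => hall p q hq }
  have hV'le : LieSubalgebra.lieSpan k L {x, y, z, u} ≤ V' := by
    rw [LieSubalgebra.lieSpan_le]
    intro g hg
    simp only [Set.mem_insert_iff, Set.mem_singleton_iff] at hg
    rcases hg with rfl | rfl | rfl | rfl
    exacts [vx, vy, vz, vu]
  have htop : V = ⊤ := by
    rw [eq_top_iff]
    intro l _
    exact hV'le (by rw [hgen]; exact LieSubalgebra.mem_top l)
  refine ⟨htop, ?_⟩
  have hrank : Module.rank k ↥V ≤ 28 := by
    rw [hVdef]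
    refine le_trans (rank_span_le (R := k) S) ?_
    have hsub : S ⊆ Set.range fun i : ULift (Fin 28) => ![x, y, z, u, ⁅x, y⁆, ⁅x, z⁆, ⁅x, u⁆, ⁅y, z⁆, ⁅y, u⁆, ⁅z, u⁆, ⁅x, ⁅y, z⁆⁆, ⁅x, ⁅y, u⁆⁆, ⁅x, ⁅z, u⁆⁆, ⁅y, ⁅x, z⁆⁆, ⁅y, ⁅x, u⁆⁆, ⁅y, ⁅z, u⁆⁆, ⁅z, ⁅x, u⁆⁆, ⁅z, ⁅y, u⁆⁆, ⁅x, ⁅y, ⁅z, u⁆⁆⁆, ⁅x, ⁅z, ⁅y, u⁆⁆⁆, ⁅y, ⁅x, ⁅z, u⁆⁆⁆, ⁅y, ⁅z, ⁅x, u⁆⁆⁆, ⁅z, ⁅x, ⁅y, u⁆⁆⁆, ⁅z, ⁅y, ⁅x, u⁆⁆⁆, ⁅x, ⁅y, ⁅z, ⁅x, u⁆⁆⁆⁆, ⁅y, ⁅x, ⁅z, ⁅y, u⁆⁆⁆⁆, ⁅z, ⁅x, ⁅y, ⁅z, u⁆⁆⁆⁆, ⁅u, ⁅x, ⁅y, ⁅z,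 u⁆⁆⁆⁆] i.down := by
      intro s hs
      rw [hSdef] at hs
      simp only [Set.mem_insert_iff, Set.mem_singleton_iff] at hs
      rcases hs with rfl | rfl | rfl | rfl | rfl | rfl | rfl | rfl | rfl | rfl | rfl | rfl | rfl | rfl | rfl | rfl | rfl | rfl | rfl | rfl | rfl | rfl | rfl | rfl | rfl | rfl | rfl | rfl
      · exact ⟨⟨0⟩, rfl⟩
      · exact ⟨⟨1⟩, rfl⟩
      · exact ⟨⟨2⟩, rfl⟩
      · exact ⟨⟨3⟩, rfl⟩
      · exact ⟨⟨4⟩, rfl⟩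
      · exact ⟨⟨5⟩, rfl⟩
      · exact ⟨⟨6⟩, rfl⟩
      · exact ⟨⟨7⟩, rfl⟩
      · exact ⟨⟨8⟩, rfl⟩
      · exact ⟨⟨9⟩, rfl⟩
      · exact ⟨⟨10⟩, rfl⟩
      · exact ⟨⟨11⟩, rfl⟩
      · exact ⟨⟨12⟩, rfl⟩
      · exact ⟨⟨13⟩, rfl⟩
      · exact ⟨⟨14⟩, rfl⟩
      · exact ⟨⟨15⟩, rfl⟩
      · exact ⟨⟨16⟩, rfl⟩
      · exact ⟨⟨17⟩, rfl⟩
      · exact ⟨⟨18⟩, rfl⟩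
      · exact ⟨⟨19⟩, rfl⟩
      · exact ⟨⟨20⟩, rfl⟩
      · exact ⟨⟨21⟩, rfl⟩
      · exact ⟨⟨22⟩, rfl⟩
      · exact ⟨⟨23⟩, rfl⟩
      · exact ⟨⟨24⟩, rfl⟩
      · exact ⟨⟨25⟩, rfl⟩
      · exact ⟨⟨26⟩, rfl⟩
      · exact ⟨⟨27⟩, rfl⟩
    refine le_trans (Cardinal.mk_le_mk_of_subset hsub) (le_trans Cardinal.mk_range_le ?_)
    simp
  calc Module.rank k L = Module.rank k ↥(⊤ : Submodule k L) := (rank_top k L).symm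
    _ = Module.rank k ↥V := by rw [htop]
    _ ≤ 28 := hrank
end

section
/- Let L be a Lie algebra over a field k of characteristic not 2 generated by three extremal elements. Then the dimension of L is at most 8. -/
/-- Key identity for an extremal element `p`: the bracket of `⁅p,u⁆` and `⁅p,v⁆`
lies in any submodule containing `⁅p,⁅p,⁅u,v⁆⁆⁆`, `⁅p,u⁆` and `⁅p,v⁆`
(using char ≠ 2). -/
lemma key_mem {k L : Type*} [Field k] [LieRing L] [LieAlgebra k L]
    (hchar : (2 : k) ≠ 0) (P : Submodule k L) {p u v : L} {cu cv : k}
    (hu : ⁅p, ⁅p, u⁆⁆ = cu • p) (hv : ⁅p, ⁅p, v⁆⁆ = cv • p)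
    (h1 : ⁅p, ⁅p, ⁅u, v⁆⁆⁆ ∈ P) (h2 : ⁅p, u⁆ ∈ P) (h3 : ⁅p, v⁆ ∈ P) :
    ⁅⁅p, u⁆, ⁅p, v⁆⁆ ∈ P := by
  have main : ⁅p, ⁅p, ⁅u, v⁆⁆⁆
      = cu • ⁅p, v⁆ - cv • ⁅p, u⁆ + (2 : k) • ⁅⁅p, u⁆, ⁅p, v⁆⁆ := by
    rw [leibniz_lie p u v, lie_add, leibniz_lie p ⁅p, u⁆ v, leibniz_lie p u ⁅p, v⁆,
      hu, hv, smul_lie, lie_smul, ← lie_skew p u, smul_neg, two_smul]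
    abel
  have h2m : (2 : k) • ⁅⁅p, u⁆, ⁅p, v⁆⁆ ∈ P := by
    have e : (2 : k) • ⁅⁅p, u⁆, ⁅p, v⁆⁆
        = ⁅p, ⁅p, ⁅u, v⁆⁆⁆ - cu • ⁅p, v⁆ + cv • ⁅p, u⁆ := by
      rw [main]; abel
    rw [e]
    exact add_mem (sub_mem h1 (P.smul_mem _ h3)) (P.smul_mem _ h2)
  have h := P.smul_mem ((2 : k)⁻¹) h2m
  rwa [smul_smul, inv_mul_cancel₀ hchar, one_smul] at h

/-- A Lie algebra generated by three extremal elements is spanned as a module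
by the eight elements `x, y, z, ⁅x,y⁆, ⁅x,z⁆, ⁅y,z⁆, ⁅x,⁅y,z⁆⁆, ⁅y,⁅x,z⁆⁆`. -/
lemma span_eight_eq_top {k L : Type*} [Field k] [LieRing L]
    [LieAlgebra k L] (hchar : (2 : k) ≠ 0) (x y z : L)
    (hx : ∀ w : L, ∃ c : k, ⁅x, ⁅x, w⁆⁆ = c • x)
    (hy : ∀ w : L, ∃ c : k, ⁅y, ⁅y, w⁆⁆ = c • y)
    (hz : ∀ w : L, ∃ c : k, ⁅z, ⁅z, w⁆⁆ = c • z)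
    (hgen : LieSubalgebra.lieSpan k L {x, y, z} = ⊤) :
    Submodule.span k
      (Set.range ![x, y, z, ⁅x, y⁆, ⁅x, z⁆, ⁅y, z⁆, ⁅x, ⁅y, z⁆⁆, ⁅y, ⁅x, z⁆⁆]) = ⊤ := by
  set P : Submodule k L := Submodule.span k
      (Set.range ![x, y, z, ⁅x, y⁆, ⁅x, z⁆, ⁅y, z⁆, ⁅x, ⁅y, z⁆⁆, ⁅y, ⁅x, z⁆⁆]) with hP
  -- generators are in P
  have hxP : x ∈ P := Submodule.subset_span ⟨0, rfl⟩
  have hyP : y ∈ P := Submodule.subset_span ⟨1, rfl⟩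
  have hzP : z ∈ P := Submodule.subset_span ⟨2, rfl⟩
  have haP : ⁅x, y⁆ ∈ P := Submodule.subset_span ⟨3, rfl⟩
  have hbP : ⁅x, z⁆ ∈ P := Submodule.subset_span ⟨4, rfl⟩
  have hcP : ⁅y, z⁆ ∈ P := Submodule.subset_span ⟨5, rfl⟩
  have huP : ⁅x, ⁅y, z⁆⁆ ∈ P := Submodule.subset_span ⟨6, rfl⟩
  have hvP : ⁅y, ⁅x, z⁆⁆ ∈ P := Submodule.subset_span ⟨7, rfl⟩
  -- swap helper
  have sw : ∀ m n : L, ⁅m, n⁆ ∈ P → ⁅n, m⁆ ∈ P := by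
    intro m n h
    rw [← lie_skew n m]
    exact neg_mem h
  -- extremal scalars
  obtain ⟨cy, hcy⟩ := hx y
  obtain ⟨cz, hcz⟩ := hx z
  obtain ⟨cc, hcc⟩ := hx ⁅y, z⁆
  obtain ⟨dx, hdx⟩ := hy x
  obtain ⟨dz, hdz⟩ := hy z
  obtain ⟨db, hdb⟩ := hy ⁅x, z⁆
  obtain ⟨ex, hex⟩ := hz x
  obtain ⟨ey, hey⟩ := hz y
  obtain ⟨ea, hea⟩ := hz ⁅x, y⁆
  -- reversed-bracket equalities
  have hya' : ⁅y, ⁅x, y⁆⁆ = -(dx • y) := by rw [← lie_skew x y, lie_neg, hdx]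
  have hzb' : ⁅z, ⁅x, z⁆⁆ = -(ex • z) := by rw [← lie_skew x z, lie_neg, hex]
  have hzc' : ⁅z, ⁅y, z⁆⁆ = -(ey • z) := by rw [← lie_skew y z, lie_neg, hey]
  -- ad x on generators
  have hxa : ⁅x, ⁅x, y⁆⁆ ∈ P := hcy ▸ P.smul_mem cy hxP
  have hxb : ⁅x, ⁅x, z⁆⁆ ∈ P := hcz ▸ P.smul_mem cz hxP
  have hxu : ⁅x, ⁅x, ⁅y, z⁆⁆⁆ ∈ P := hcc ▸ P.smul_mem cc hxP
  -- ad y on generators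
  have hya : ⁅y, ⁅x, y⁆⁆ ∈ P := hya' ▸ neg_mem (P.smul_mem dx hyP)
  have hyc : ⁅y, ⁅y, z⁆⁆ ∈ P := hdz ▸ P.smul_mem dz hyP
  have hyv : ⁅y, ⁅y, ⁅x, z⁆⁆⁆ ∈ P := hdb ▸ P.smul_mem db hyP
  -- ad z on generators
  have hzb : ⁅z, ⁅x, z⁆⁆ ∈ P := hzb' ▸ neg_mem (P.smul_mem ex hzP)
  have hzc : ⁅z, ⁅y, z⁆⁆ ∈ P := hzc' ▸ neg_mem (P.smul_mem ey hzP)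
  have hza : ⁅z, ⁅x, y⁆⁆ ∈ P := by
    rw [← lie_skew z ⁅x, y⁆, lie_lie]
    exact neg_mem (sub_mem huP hvP)
  -- degree 2 × degree 2 brackets via the key identity
  have hab : ⁅⁅x, y⁆, ⁅x, z⁆⁆ ∈ P :=
    key_mem hchar P hcy hcz hxu haP hbP
  have hac : ⁅⁅x, y⁆, ⁅y, z⁆⁆ ∈ P := by
    have h := key_mem hchar P hdx hdz hyv (sw _ _ haP) hcP
    rw [← lie_skew x y, neg_lie]
    exact neg_mem h
  have hbc : ⁅⁅x, z⁆, ⁅y, z⁆⁆ ∈ P := by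
    have h1 : ⁅z, ⁅z, ⁅x, y⁆⁆⁆ ∈ P := hea ▸ P.smul_mem ea hzP
    have h := key_mem hchar P hex hey h1 (sw _ _ hbP) (sw _ _ hcP)
    rw [← lie_skew x z, ← lie_skew y z, neg_lie, lie_neg, neg_neg]
    exact h
  -- remaining ad facts on degree-3 generators
  have hxv : ⁅x, ⁅y, ⁅x, z⁆⁆⁆ ∈ P := by
    rw [leibniz_lie x y ⁅x, z⁆]
    exact add_mem hab (by rw [hcz, lie_smul]; exact P.smul_mem cz (sw _ _ haP))
  have hyu : ⁅y, ⁅x, ⁅y, z⁆⁆⁆ ∈ P := by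
    rw [leibniz_lie y x ⁅y, z⁆]
    refine add_mem ?_ ?_
    · rw [← lie_skew y x, neg_lie]
      exact neg_mem hac
    · rw [hdz, lie_smul]
      exact P.smul_mem dz haP
  have hzu : ⁅z, ⁅x, ⁅y, z⁆⁆⁆ ∈ P := by
    rw [leibniz_lie z x ⁅y, z⁆]
    refine add_mem ?_ ?_
    · rw [← lie_skew z x, neg_lie]
      exact neg_mem hbc
    · rw [hzc', lie_neg, lie_smul]
      exact neg_mem (P.smul_mem ey hbP)
  have hzv : ⁅z, ⁅y, ⁅x, z⁆⁆⁆ ∈ P := by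
    rw [leibniz_lie z y ⁅x, z⁆]
    refine add_mem ?_ ?_
    · rw [← lie_skew z y, neg_lie]
      exact neg_mem (sw _ _ hbc)
    · rw [hzb', lie_neg, lie_smul]
      exact neg_mem (P.smul_mem ex hcP)
  -- ad x, ad y, ad z are stable on P
  have diag : ∀ m : L, ⁅m, m⁆ ∈ P := fun m => by rw [lie_self]; exact P.zero_mem
  have adx : ∀ w ∈ P, ⁅x, w⁆ ∈ P := by
    intro w hw
    induction hw using Submodule.span_induction with
    | mem g hg =>
      obtain ⟨i, rfl⟩ := hg
      fin_cases i
      · exact diag x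
      · exact haP
      · exact hbP
      · exact hxa
      · exact hxb
      · exact huP
      · exact hxu
      · exact hxv
    | zero => rw [lie_zero]; exact P.zero_mem
    | add a b _ _ ha hb => rw [lie_add]; exact add_mem ha hb
    | smul t a _ ha => rw [lie_smul]; exact P.smul_mem t ha
  have ady : ∀ w ∈ P, ⁅y, w⁆ ∈ P := by
    intro w hw
    induction hw using Submodule.span_induction with
    | mem g hg =>
      obtain ⟨i, rfl⟩ := hg
      fin_cases i
      · exact sw _ _ haP
      · exact diag y
      · exact hcP
      · exact hya
      · exact hvP
      · exact hyc
      · exact hyu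
      · exact hyv
    | zero => rw [lie_zero]; exact P.zero_mem
    | add a b _ _ ha hb => rw [lie_add]; exact add_mem ha hb
    | smul t a _ ha => rw [lie_smul]; exact P.smul_mem t ha
  have adz : ∀ w ∈ P, ⁅z, w⁆ ∈ P := by
    intro w hw
    induction hw using Submodule.span_induction with
    | mem g hg =>
      obtain ⟨i, rfl⟩ := hg
      fin_cases i
      · exact sw _ _ hbP
      · exact sw _ _ hcP
      · exact diag z
      · exact hza
      · exact hzb
      · exact hzc
      · exact hzu
      · exact hzv
    | zero => rw [lie_zero]; exact P.zero_mem
    | add a b _ _ ha hb => rw [lie_add]; exact add_mem ha hb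
    | smul t a _ ha => rw [lie_smul]; exact P.smul_mem t ha
  -- degree 2 × degree 3 brackets
  have hau : ⁅⁅x, y⁆, ⁅x, ⁅y, z⁆⁆⁆ ∈ P := by
    refine key_mem hchar P hcy hcc ?_ haP huP
    have h : ⁅y, ⁅y, z⁆⁆ = dz • y := hdz
    rw [h, lie_smul, lie_smul, hcy]
    exact P.smul_mem dz (P.smul_mem cy hxP)
  have hav : ⁅⁅x, y⁆, ⁅y, ⁅x, z⁆⁆⁆ ∈ P := by
    have key : ⁅⁅y, x⁆, ⁅y, ⁅x, z⁆⁆⁆ ∈ P := by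
      refine key_mem hchar P hdx hdb ?_ (sw _ _ haP) hvP
      have h : ⁅x, ⁅x, z⁆⁆ = cz • x := hcz
      rw [h, lie_smul, lie_smul, hdx]
      exact P.smul_mem cz (P.smul_mem dx hyP)
    rw [← lie_skew x y, neg_lie]
    exact neg_mem key
  have hbu : ⁅⁅x, z⁆, ⁅x, ⁅y, z⁆⁆⁆ ∈ P := by
    refine key_mem hchar P hcz hcc ?_ hbP huP
    rw [hzc', lie_neg, lie_neg, lie_smul, lie_smul, hcz]
    exact neg_mem (P.smul_mem ey (P.smul_mem cz hxP))
  have hbv : ⁅⁅x, z⁆, ⁅y, ⁅x, z⁆⁆⁆ ∈ P := by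
    rw [lie_lie x z ⁅y, ⁅x, z⁆⁆]
    exact sub_mem (adx _ (adz _ hvP)) (adz _ (adx _ hvP))
  have hcu : ⁅⁅y, z⁆, ⁅x, ⁅y, z⁆⁆⁆ ∈ P := by
    rw [lie_lie y z ⁅x, ⁅y, z⁆⁆]
    exact sub_mem (ady _ (adz _ huP)) (adz _ (ady _ huP))
  have hcv : ⁅⁅y, z⁆, ⁅y, ⁅x, z⁆⁆⁆ ∈ P := by
    rw [lie_lie y z ⁅y, ⁅x, z⁆⁆]
    exact sub_mem (ady _ (adz _ hvP)) (adz _ (ady _ hvP))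
  -- degree 3 × degree 3
  have huv : ⁅⁅x, ⁅y, z⁆⁆, ⁅y, ⁅x, z⁆⁆⁆ ∈ P := by
    rw [lie_lie x ⁅y, z⁆ ⁅y, ⁅x, z⁆⁆]
    refine sub_mem (adx _ hcv) ?_
    rw [lie_lie y z ⁅x, ⁅y, ⁅x, z⁆⁆⁆]
    exact sub_mem (ady _ (adz _ hxv)) (adz _ (ady _ hxv))
  -- brackets of generators are in P
  have table : ∀ i j : Fin 8, ⁅(![x, y, z, ⁅x, y⁆, ⁅x, z⁆, ⁅y, z⁆, ⁅x, ⁅y, z⁆⁆,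
      ⁅y, ⁅x, z⁆⁆] : Fin 8 → L) i,
      (![x, y, z, ⁅x, y⁆, ⁅x, z⁆, ⁅y, z⁆, ⁅x, ⁅y, z⁆⁆, ⁅y, ⁅x, z⁆⁆] : Fin 8 → L) j⁆ ∈ P := by
    intro i j
    fin_cases i <;> fin_cases j
    -- row x
    · exact diag x
    · exact haP
    · exact hbP
    · exact hxa
    · exact hxb
    · exact huP
    · exact hxu
    · exact hxv
    -- row y
    · exact sw _ _ haP
    · exact diag y
    · exact hcP
    · exact hya
    · exact hvP
    · exact hyc
    · exact hyu
    · exact hyv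
    -- row z
    · exact sw _ _ hbP
    · exact sw _ _ hcP
    · exact diag z
    · exact hza
    · exact hzb
    · exact hzc
    · exact hzu
    · exact hzv
    -- row ⁅x,y⁆
    · exact sw _ _ hxa
    · exact sw _ _ hya
    · exact sw _ _ hza
    · exact diag _
    · exact hab
    · exact hac
    · exact hau
    · exact hav
    -- row ⁅x,z⁆
    · exact sw _ _ hxb
    · exact sw _ _ hvP
    · exact sw _ _ hzb
    · exact sw _ _ hab
    · exact diag _
    · exact hbc
    · exact hbu
    · exact hbv
    -- row ⁅y,z⁆
    · exact sw _ _ huP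
    · exact sw _ _ hyc
    · exact sw _ _ hzc
    · exact sw _ _ hac
    · exact sw _ _ hbc
    · exact diag _
    · exact hcu
    · exact hcv
    -- row ⁅x,⁅y,z⁆⁆
    · exact sw _ _ hxu
    · exact sw _ _ hyu
    · exact sw _ _ hzu
    · exact sw _ _ hau
    · exact sw _ _ hbu
    · exact sw _ _ hcu
    · exact diag _
    · exact huv
    -- row ⁅y,⁅x,z⁆⁆
    · exact sw _ _ hxv
    · exact sw _ _ hyv
    · exact sw _ _ hzv
    · exact sw _ _ hav
    · exact sw _ _ hbv
    · exact sw _ _ hcv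
    · exact sw _ _ huv
    · exact diag _
  -- P is closed under the bracket
  have hclosed : ∀ m ∈ P, ∀ n ∈ P, ⁅m, n⁆ ∈ P := by
    intro m hm
    induction hm using Submodule.span_induction with
    | mem g hg =>
      obtain ⟨i, rfl⟩ := hg
      intro n hn
      induction hn using Submodule.span_induction with
      | mem g' hg' =>
        obtain ⟨j, rfl⟩ := hg'
        exact table i j
      | zero => rw [lie_zero]; exact P.zero_mem
      | add a b _ _ ha hb => rw [lie_add]; exact add_mem ha hb
      | smul t a _ ha => rw [lie_smul]; exact P.smul_mem t ha
    | zero => intro n hn; rw [zero_lie]; exact P.zero_mem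
    | add a b _ _ ha hb => intro n hn; rw [add_lie]; exact add_mem (ha n hn) (hb n hn)
    | smul t a _ ha => intro n hn; rw [smul_lie]; exact P.smul_mem t (ha n hn)
  -- P is a Lie subalgebra containing x, y, z, hence all of L
  let S : LieSubalgebra k L :=
    { P with lie_mem' := fun {a b} ha hb => hclosed a ha b hb }
  have hle : LieSubalgebra.lieSpan k L {x, y, z} ≤ S := by
    rw [LieSubalgebra.lieSpan_le]
    intro w hw
    rcases hw with rfl | rfl | rfl
    · exact hxP
    · exact hyP
    · exact hzP
  rw [hgen] at hle
  rw [eq_top_iff]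
  intro w _
  exact hle (LieSubalgebra.mem_top w)

/-- A Lie algebra generated by three extremal elements has dimension at most 8. -/
theorem three_extremal_generators_rank_le_eight {k L : Type*} [Field k] [LieRing L]
    [LieAlgebra k L] (hchar : (2 : k) ≠ 0) (x y z : L)
    (hx : ∀ w : L, ∃ c : k, ⁅x, ⁅x, w⁆⁆ = c • x)
    (hy : ∀ w : L, ∃ c : k, ⁅y, ⁅y, w⁆⁆ = c • y)
    (hz : ∀ w : L, ∃ c : k, ⁅z, ⁅z, w⁆⁆ = c • z)
    (hgen : LieSubalgebra.lieSpan k L {x, y, z} = ⊤) :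
    Module.rank k L ≤ 8 := by
  have hspan := span_eight_eq_top hchar x y z hx hy hz hgen
  calc Module.rank k L
      = Module.rank k (⊤ : Submodule k L) := (rank_top k L).symm
    _ = Module.rank k (Submodule.span k (Set.range
          ![x, y, z, ⁅x, y⁆, ⁅x, z⁆, ⁅y, z⁆, ⁅x, ⁅y, z⁆⁆, ⁅y, ⁅x, z⁆⁆])) := by
        rw [hspan]
    _ ≤ Cardinal.mk (Set.range
          ![x, y, z, ⁅x, y⁆, ⁅x, z⁆, ⁅y, z⁆, ⁅x, ⁅y, z⁆⁆, ⁅y, ⁅x, z⁆⁆]) :=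
        rank_span_le _
    _ ≤ 8 := by
        simpa using Cardinal.mk_range_le_lift
          (f := (![x, y, z, ⁅x, y⁆, ⁅x, z⁆, ⁅y, z⁆, ⁅x, ⁅y, z⁆⁆, ⁅y, ⁅x, z⁆⁆] : Fin 8 → L))
end

section
/- Let L be a finite-dimensional Lie algebra over a field k of characteristic not 2 generated by extremal elements, with associated associative symmetric bilinear form f. Let x be extremal, y ∈ L, and φ = ad_x ∘ ad_y. Then φ² + (1/2)f(x,y)·φ maps L into the subspace kx + k[x,y]. -/
/-- Lemma 9.1: for extremal `x` and any `y`, with `φ = ad_x ∘ ad_y`, the map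
`φ² + (1/2) f(x,y) φ` takes values in `kx + k⁅x,y⁆`. -/
theorem phi_sq_maps_into_span {k L : Type*} [Field k] [LieRing L] [LieAlgebra k L]
    [FiniteDimensional k L] (hchar : (2 : k) ≠ 0)
    (f : L →ₗ[k] L →ₗ[k] k)
    (hsym : ∀ a b : L, f a b = f b a)
    (hassoc : ∀ a b c : L, f a ⁅b, c⁆ = f ⁅a, b⁆ c)
    (hgen : LieSubalgebra.lieSpan k L
      {a : L | a ≠ 0 ∧ ∀ z : L, ⁅a, ⁅a, z⁆⁆ = f a z • a} = ⊤)
    (x : L) (hx : ∀ z : L, ⁅x, ⁅x, z⁆⁆ = f x z • x) (y : L) :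
    ∀ z : L, ⁅x, ⁅y, ⁅x, ⁅y, z⁆⁆⁆⁆ + (f x y / 2) • ⁅x, ⁅y, z⁆⁆ ∈
      Submodule.span k ({x, ⁅x, y⁆} : Set L) := by
  intro z
  set u : L := ⁅y, z⁆ with hu
  -- key identity: 2 • ⁅x,⁅y,⁅x,u⁆⁆⁆ = f x ⁅y,u⁆ • x - f x y • ⁅x,u⁆ - f x u • ⁅x,y⁆
  have hA : ⁅x, ⁅y, ⁅x, u⁆⁆⁆ = f x ⁅y, u⁆ • x + ⁅x, ⁅u, ⁅x, y⁆⁆⁆ := by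
    have h1 : ⁅y, ⁅x, u⁆⁆ = ⁅x, ⁅y, u⁆⁆ + ⁅u, ⁅x, y⁆⁆ := by
      have h2 := leibniz_lie x y u
      have h3 : ⁅u, ⁅x, y⁆⁆ = -⁅⁅x, y⁆, u⁆ := by rw [← lie_skew]
      rw [h3]
      rw [h2]; abel
    rw [h1, lie_add, hx]
  have hB : ⁅x, ⁅y, ⁅x, u⁆⁆⁆ = ⁅⁅x, y⁆, ⁅x, u⁆⁆ + f x u • ⁅y, x⁆ := by
    rw [leibniz_lie x y ⁅x, u⁆, hx u, lie_smul]
  have hC : ⁅x, ⁅u, ⁅x, y⁆⁆⁆ = ⁅⁅x, u⁆, ⁅x, y⁆⁆ + f x y • ⁅u, x⁆ := by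
    rw [leibniz_lie x u ⁅x, y⁆, hx y, lie_smul]
  have hD : ⁅⁅x, u⁆, ⁅x, y⁆⁆ = -⁅⁅x, y⁆, ⁅x, u⁆⁆ := by rw [lie_skew]
  have key : (2 : k) • ⁅x, ⁅y, ⁅x, u⁆⁆⁆
      = f x ⁅y, u⁆ • x - f x y • ⁅x, u⁆ - f x u • ⁅x, y⁆ := by
    have hyx : ⁅y, x⁆ = -⁅x, y⁆ := by rw [← lie_skew]
    have hux : ⁅u, x⁆ = -⁅x, u⁆ := by rw [← lie_skew]
    rw [two_smul]
    nth_rewrite 1 [hA]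
    nth_rewrite 1 [hB]
    rw [hC, hD, hyx, hux]
    module
  have hfin : ⁅x, ⁅y, ⁅x, u⁆⁆⁆ + (f x y / 2) • ⁅x, u⁆
      = (f x ⁅y, u⁆ / 2) • x - (f x u / 2) • ⁅x, y⁆ := by
    apply smul_right_injective L hchar
    dsimp only
    rw [smul_add, key, smul_smul, smul_sub, smul_smul, smul_smul,
      mul_div_cancel₀ _ hchar, mul_div_cancel₀ _ hchar, mul_div_cancel₀ _ hchar]
    module
  rw [hfin]
  exact sub_mem
    (Submodule.smul_mem _ _ (Submodule.subset_span (by simp)))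
    (Submodule.smul_mem _ _ (Submodule.subset_span (by simp)))
end

section
/- Let L be a finite-dimensional Lie algebra over a field k of characteristic not 2 generated by extremal elements, with associated bilinear form f and Killing form κ. If x is extremal and y ∈ L with f(x,y) = 0, then ad_x ∘ ad_y is nilpotent; in particular κ(x,y) = 0. -/
/-- Lemma 9.2 a): if `x` is extremal and `f(x,y) = 0`, then `ad_x ∘ ad_y` is nilpotent and
`κ(x,y) = 0`. -/
theorem ad_comp_ad_nilpotent_of_form_zero {k L : Type*} [Field k] [LieRing L] [LieAlgebra k L]
    [FiniteDimensional k L] (hchar : (2 : k) ≠ 0)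
    (f : L →ₗ[k] L →ₗ[k] k)
    (hsym : ∀ a b : L, f a b = f b a)
    (hassoc : ∀ a b c : L, f a ⁅b, c⁆ = f ⁅a, b⁆ c)
    (hgen : LieSubalgebra.lieSpan k L
      {a : L | a ≠ 0 ∧ ∀ z : L, ⁅a, ⁅a, z⁆⁆ = f a z • a} = ⊤)
    (x : L) (hx : ∀ z : L, ⁅x, ⁅x, z⁆⁆ = f x z • x)
    (y : L) (hfxy : f x y = 0) :
    IsNilpotent ((LieAlgebra.ad k L x ∘ₗ LieAlgebra.ad k L y : Module.End k L)) ∧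
      killingForm k L x y = 0 := by
  classical
  set u : L := ⁅x, y⁆ with hu
  -- basic bracket facts
  have hxu : ⁅x, u⁆ = 0 := by rw [hu, hx y, hfxy, zero_smul]
  have hux : ⁅u, x⁆ = 0 := by rw [← lie_skew, hxu, neg_zero]
  have hyx : ⁅y, x⁆ = -u := by rw [hu, ← lie_skew]
  -- f facts
  have hfx_u : ∀ w : L, f x ⁅u, w⁆ = 0 := fun w => by
    rw [hassoc, hxu, map_zero, LinearMap.zero_apply]
  have hfu_u : ∀ w : L, f u ⁅u, w⁆ = 0 := fun w => by
    rw [hassoc, lie_self, map_zero, LinearMap.zero_apply]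
  have hfx_y : ∀ w : L, f x ⁅y, w⁆ = f u w := fun w => by rw [hassoc, ← hu]
  -- commuting of ad x with ad u
  have h1 : ∀ z : L, ⁅x, ⁅u, z⁆⁆ = ⁅u, ⁅x, z⁆⁆ := fun z => by
    rw [leibniz_lie, hxu, zero_lie, zero_add]
  -- key Premet-type identity
  have h2 : ∀ z : L, (2 : k) • ⁅u, ⁅x, z⁆⁆ = f x ⁅y, z⁆ • x + f x z • u := by
    intro z
    have e0 : ⁅u, ⁅x, z⁆⁆ = ⁅x, ⁅y, ⁅x, z⁆⁆⁆ - ⁅y, ⁅x, ⁅x, z⁆⁆⁆ := by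
      rw [hu]; exact lie_lie x y ⁅x, z⁆
    have e1 : ⁅y, ⁅x, ⁅x, z⁆⁆⁆ = -(f x z • u) := by
      rw [hx z, lie_smul, hyx, smul_neg]
    have e2a : ⁅y, ⁅x, z⁆⁆ = ⁅x, ⁅y, z⁆⁆ - ⁅u, z⁆ := by
      have h := lie_lie x y z
      rw [← hu] at h
      rw [h]; abel
    have e2 : ⁅x, ⁅y, ⁅x, z⁆⁆⁆ = f x ⁅y, z⁆ • x - ⁅u, ⁅x, z⁆⁆ := by
      rw [e2a, lie_sub, hx ⁅y, z⁆, h1 z]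
    rw [e2, e1] at e0
    rw [two_smul]
    nth_rewrite 1 [e0]
    abel
  have h2' : ∀ z : L, ⁅u, ⁅x, z⁆⁆ = (2 : k)⁻¹ • (f x ⁅y, z⁆ • x + f x z • u) := by
    intro z
    rw [← h2 z, inv_smul_smul₀ hchar]
  -- the square of ad u
  have K2 : ∀ w : L, ⁅u, ⁅u, w⁆⁆ =
      (2 : k)⁻¹ • (f x ⁅y, ⁅y, w⁆⁆ • x + f x ⁅y, w⁆ • u) - ⁅u, ⁅y, ⁅x, w⁆⁆⁆ := by
    intro w
    have s1 : ⁅u, w⁆ = ⁅x, ⁅y, w⁆⁆ - ⁅y, ⁅x, w⁆⁆ := by rw [hu]; exact lie_lie x y w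
    rw [s1, lie_sub, h2' ⁅y, w⁆]
  set v : L := ⁅u, ⁅u, y⁆⁆ with hv
  -- cube of ad u
  have K3 : ∀ z : L, ⁅u, ⁅u, ⁅u, z⁆⁆⁆ =
      (2 : k)⁻¹ • (f x z • v) - (2 : k)⁻¹ • (f v z • x) := by
    intro z
    have c1 : f x ⁅y, ⁅y, ⁅u, z⁆⁆⁆ = -(f v z) := by
      rw [hfx_y, hassoc u y, hassoc ⁅u, y⁆ u z]
      have hvv : ⁅⁅u, y⁆, u⁆ = -v := by rw [hv, ← lie_skew]
      rw [hvv, map_neg, LinearMap.neg_apply]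
    have c2 : f x ⁅y, ⁅u, z⁆⁆ = 0 := by rw [hfx_y, hfu_u]
    have c4 : ⁅u, ⁅y, ⁅x, ⁅u, z⁆⁆⁆⁆ = -((2 : k)⁻¹ • (f x z • v)) := by
      have hyu : ⁅y, u⁆ = -⁅u, y⁆ := by rw [lie_skew]
      rw [h1 z, h2' z]
      simp only [lie_add, lie_smul, hyx, hyu, lie_neg, lie_self, lie_zero, neg_zero,
        smul_zero, zero_add, smul_neg, neg_zero, ← hv]
    rw [K2 ⁅u, z⁆, c1, c2, c4, zero_smul, add_zero, neg_smul, smul_neg, sub_neg_eq_add]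
    abel
  -- S^3 y, S^4 y
  have hS3y : ⁅u, v⁆ = -((2 : k)⁻¹ • (f v y • x)) := by
    have h := K3 y
    rw [← hv] at h
    rw [h, hfxy, zero_smul, smul_zero, zero_sub]
  have hS4 : ⁅u, ⁅u, v⁆⁆ = 0 := by
    rw [hS3y, lie_neg, lie_smul, lie_smul, hux, smul_zero, smul_zero, neg_zero]
  -- fifth power of ad u vanishes
  have hS5 : ∀ z : L, ⁅u, ⁅u, ⁅u, ⁅u, ⁅u, z⁆⁆⁆⁆⁆ = 0 := by
    intro z
    rw [K3 z]
    simp only [lie_sub, lie_smul, hux, lie_zero, smul_zero, sub_zero]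
    rw [hS4, smul_zero, smul_zero]
  -- facts about A = ad x ∘ ad y
  have hfu_A : ∀ w : L, f u ⁅x, ⁅y, w⁆⁆ = 0 := fun w => by
    rw [hassoc, hux, map_zero, LinearMap.zero_apply]
  have hkey : ∀ w : L, ⁅x, ⁅y, ⁅x, ⁅y, w⁆⁆⁆⁆ = ⁅u, ⁅x, ⁅y, w⁆⁆⁆ - f x ⁅y, w⁆ • u := by
    intro w
    have h := lie_lie x y ⁅x, ⁅y, w⁆⁆
    rw [← hu, hx ⁅y, w⁆, lie_smul, hyx, smul_neg] at h
    rw [eq_sub_iff_add_eq] at h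
    rw [← h]; abel
  have hkey' : ∀ w : L, ⁅x, ⁅y, ⁅x, ⁅y, ⁅x, ⁅y, w⁆⁆⁆⁆⁆⁆ = ⁅u, ⁅x, ⁅y, ⁅x, ⁅y, w⁆⁆⁆⁆⁆ := by
    intro w
    rw [hkey ⁅x, ⁅y, w⁆⁆, hfx_y, hfu_A, zero_smul, sub_zero]
  -- A^7 = 0
  have hA7 : ((LieAlgebra.ad k L x ∘ₗ LieAlgebra.ad k L y : Module.End k L)) ^ 7 = 0 := by
    ext z
    simp only [LinearMap.zero_apply, pow_succ, pow_zero, Module.End.mul_apply, Module.End.one_apply, LinearMap.comp_apply,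
      LieAlgebra.ad_apply]
    rw [hkey' ⁅x, ⁅y, ⁅x, ⁅y, ⁅x, ⁅y, ⁅x, ⁅y, z⁆⁆⁆⁆⁆⁆⁆⁆,
      hkey' ⁅x, ⁅y, ⁅x, ⁅y, ⁅x, ⁅y, z⁆⁆⁆⁆⁆⁆,
      hkey' ⁅x, ⁅y, ⁅x, ⁅y, z⁆⁆⁆⁆,
      hkey' ⁅x, ⁅y, z⁆⁆,
      hkey' z]
    exact hS5 ⁅x, ⁅y, ⁅x, ⁅y, z⁆⁆⁆⁆
  refine ⟨⟨7, hA7⟩, ?_⟩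
  rw [killingForm_apply_apply]
  exact IsNilpotent.eq_zero (LinearMap.isNilpotent_trace_of_isNilpotent ⟨7, hA7⟩)
end

section
/- Let L be a finite-dimensional Lie algebra over a field k of characteristic not 2 generated by extremal elements, with form f. The radical of f (all y with f(y,L) = 0) is contained in the radical of the Killing form κ of L. -/
section Aux

variable {k L : Type*} [Field k] [LieRing L] [LieAlgebra k L]

/-- For `x` extremal and `y` in the radical of `f`, the crucial "square" identity:
`(ad y ∘ ad x)^2 z = (f x z / 2) • ⁅y, ⁅y, x⁆⁆`. -/
theorem aux_square (hchar : (2 : k) ≠ 0)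
    (f : L →ₗ[k] L →ₗ[k] k)
    (hsym : ∀ a b : L, f a b = f b a)
    (hassoc : ∀ a b c : L, f a ⁅b, c⁆ = f ⁅a, b⁆ c)
    (x : L) (hx : ∀ z : L, ⁅x, ⁅x, z⁆⁆ = f x z • x)
    (y : L) (hy : ∀ w : L, f y w = 0) (z : L) :
    ⁅y, ⁅x, ⁅y, ⁅x, z⁆⁆⁆⁆ = (2⁻¹ * f x z) • ⁅y, ⁅y, x⁆⁆ := by
  have hfxy : f x y = 0 := by rw [hsym]; exact hy x
  -- f x ⁅y, w⁆ = 0 for all w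
  have hfxbr : ∀ w : L, f x ⁅y, w⁆ = 0 := by
    intro w
    rw [hassoc, hsym, hassoc, hsym]
    exact hy _
  -- Premet-type identity instance
  have h0 : ⁅x, ⁅x, ⁅y, z⁆⁆⁆ = 0 := by rw [hx, hfxbr, zero_smul]
  have hJ : ⁅x, ⁅y, z⁆⁆ = ⁅⁅x, y⁆, z⁆ + ⁅y, ⁅x, z⁆⁆ := leibniz_lie x y z
  have h1 : ⁅x, ⁅⁅x, y⁆, z⁆⁆ = ⁅⁅x, ⁅x, y⁆⁆, z⁆ + ⁅⁅x, y⁆, ⁅x, z⁆⁆ := leibniz_lie x ⁅x, y⁆ z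
  have h2 : ⁅x, ⁅y, ⁅x, z⁆⁆⁆ = ⁅⁅x, y⁆, ⁅x, z⁆⁆ + ⁅y, ⁅x, ⁅x, z⁆⁆⁆ := leibniz_lie x y ⁅x, z⁆
  have hxy2 : ⁅x, ⁅x, y⁆⁆ = 0 := by rw [hx, hfxy, zero_smul]
  have h3 : ⁅y, ⁅x, ⁅x, z⁆⁆⁆ = f x z • ⁅y, x⁆ := by rw [hx, lie_smul]
  -- 0 = 2 • P + f x z • ⁅y, x⁆ where P = ⁅⁅x,y⁆,⁅x,z⁆⁆
  have hsum : (0 : L) = (2 : k) • ⁅⁅x, y⁆, ⁅x, z⁆⁆ + f x z • ⁅y, x⁆ := by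
    have := hJ ▸ h0
    rw [lie_add, h1, h2, hxy2, zero_lie, zero_add, h3] at this
    rw [← this]; module
  have hP : ⁅⁅x, y⁆, ⁅x, z⁆⁆ = (2⁻¹ * f x z) • ⁅x, y⁆ := by
    have h4 : (2 : k) • ⁅⁅x, y⁆, ⁅x, z⁆⁆ = f x z • ⁅x, y⁆ := by
      have h := eq_neg_of_add_eq_zero_left hsum.symm
      rw [h, ← lie_skew y x, smul_neg, neg_neg]
    have := congrArg (fun w => (2⁻¹ : k) • w) h4
    simpa [smul_smul, inv_mul_cancel₀ hchar] using this
  -- ⁅x, ⁅y, ⁅x, z⁆⁆⁆ = (f x z / 2) • ⁅y, x⁆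
  have h5 : ⁅x, ⁅y, ⁅x, z⁆⁆⁆ = (2⁻¹ * f x z) • ⁅y, x⁆ := by
    rw [h2, hP, h3]
    have : ((2⁻¹ : k) * f x z) • ⁅x, y⁆ = -(((2⁻¹ : k) * f x z) • ⁅y, x⁆) := by
      rw [← lie_skew x y, smul_neg]
    rw [this]
    have h2inv : (2⁻¹ : k) * 2 = 1 := inv_mul_cancel₀ hchar
    have : f x z • ⁅y, x⁆ = ((2⁻¹ : k) * f x z) • ((2 : k) • ⁅y, x⁆) := by
      rw [smul_smul, mul_comm ((2⁻¹ : k) * f x z) 2, ← mul_assoc, mul_comm (2 : k) 2⁻¹, h2inv,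
        one_mul]
    rw [this]; module
  rw [h5, lie_smul]

end Aux

/-- Corollary 9.3: `Rad(f) ⊆ Rad(κ)`. -/
theorem rad_f_subset_rad_killing {k L : Type*} [Field k] [LieRing L] [LieAlgebra k L]
    [FiniteDimensional k L] (hchar : (2 : k) ≠ 0)
    (f : L →ₗ[k] L →ₗ[k] k)
    (hsym : ∀ a b : L, f a b = f b a)
    (hassoc : ∀ a b c : L, f a ⁅b, c⁆ = f ⁅a, b⁆ c)
    (hgen : LieSubalgebra.lieSpan k L
      {a : L | a ≠ 0 ∧ ∀ z : L, ⁅a, ⁅a, z⁆⁆ = f a z • a} = ⊤) :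
    ∀ y : L, (∀ z : L, f y z = 0) → ∀ z : L, killingForm k L y z = 0 := by
  -- the radical of f is closed under bracketing with anything
  have hrad_br : ∀ y a : L, (∀ w : L, f y w = 0) → ∀ w : L, f ⁅y, a⁆ w = 0 := by
    intro y a hy w
    rw [← hassoc]
    exact hy _
  -- The set of z killing-orthogonal to all of Rad f is a Lie subalgebra
  let W : LieSubalgebra k L :=
    { carrier := {z : L | ∀ y : L, (∀ w : L, f y w = 0) → killingForm k L y z = 0}
      add_mem' := fun {a b} ha hb y hy => by
        rw [map_add, ha y hy, hb y hy, add_zero]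
      zero_mem' := fun y hy => by rw [map_zero]
      smul_mem' := fun c a ha y hy => by
        rw [map_smul, ha y hy, smul_zero]
      lie_mem' := fun {a b} ha hb y hy => by
        rw [← LieModule.traceForm_apply_lie_apply k L L y a b]
        exact hb ⁅y, a⁆ (hrad_br y a hy) }
  -- every extremal element is in W
  have hext : {a : L | a ≠ 0 ∧ ∀ z : L, ⁅a, ⁅a, z⁆⁆ = f a z • a} ⊆ W := by
    rintro x ⟨-, hx⟩ y hy
    rw [killingForm_apply_apply]
    set M : Module.End k L := LieAlgebra.ad k L y ∘ₗ LieAlgebra.ad k L x with hM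
    have hfxbr : ∀ w : L, f x ⁅y, w⁆ = 0 := by
      intro w
      rw [hassoc, hsym, hassoc, hsym]
      exact hy _
    have hM2 : ∀ z : L, M (M z) = (2⁻¹ * f x z) • ⁅y, ⁅y, x⁆⁆ := by
      intro z
      simpa [hM, LieAlgebra.ad_apply] using
        aux_square hchar f hsym hassoc x hx y hy z
    have hnil : IsNilpotent M := by
      refine ⟨4, ?_⟩
      ext z
      have h4 : (M ^ 4) z = M (M (M (M z))) := by
        rw [show (4 : ℕ) = 2 + 2 by rfl, pow_add, pow_two]
        rfl
      rw [h4, hM2 z, map_smul, map_smul, hM2, hfxbr, mul_zero, zero_smul, smul_zero,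
        LinearMap.zero_apply]
    exact (LinearMap.isNilpotent_trace_of_isNilpotent hnil).eq_zero
  intro y hy z
  have hle : LieSubalgebra.lieSpan k L
      {a : L | a ≠ 0 ∧ ∀ z : L, ⁅a, ⁅a, z⁆⁆ = f a z • a} ≤ W :=
    LieSubalgebra.lieSpan_le.mpr hext
  have hz : z ∈ W := hle (hgen ▸ LieSubalgebra.mem_top z)
  exact hz y hy
end

section
/- Let L be a finite-dimensional Lie algebra over a field k of characteristic not 2 generated by extremal elements, with form f. If x is an extremal element not in Rad(f) and y ∈ Rad(f), then ad_{[x,y]}⁴ = 0. -/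
/-- Lemma 9.10: if `x` is extremal with `x ∉ Rad(f)` and `y ∈ Rad(f)`, then `ad_{[x,y]}⁴ = 0`. -/
theorem ad_lie_pow_four_eq_zero {k L : Type*} [Field k] [LieRing L] [LieAlgebra k L]
    [FiniteDimensional k L] (hchar : (2 : k) ≠ 0)
    (f : L →ₗ[k] L →ₗ[k] k)
    (hsym : ∀ a b : L, f a b = f b a)
    (hassoc : ∀ a b c : L, f a ⁅b, c⁆ = f ⁅a, b⁆ c)
    (hgen : LieSubalgebra.lieSpan k L
      {a : L | a ≠ 0 ∧ ∀ z : L, ⁅a, ⁅a, z⁆⁆ = f a z • a} = ⊤)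
    (x : L) (hx0 : x ≠ 0)
    (hx : ∀ z : L, ⁅x, ⁅x, z⁆⁆ = f x z • x)
    (hxrad : ∃ z : L, f x z ≠ 0)
    (y : L) (hyrad : ∀ z : L, f y z = 0) :
    ((LieAlgebra.ad k L ⁅x, y⁆ : Module.End k L)) ^ 4 = 0 := by
  have h2 : ∀ a : L, (2 : k) • a = 0 → a = 0 := by
    intro a h
    rcases smul_eq_zero.mp h with h | h
    · exact absurd h hchar
    · exact h
  have hfxy : f x y = 0 := by rw [hsym]; exact hyrad x
  -- `⁅x, ⁅x, y⁆⁆ = 0`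
  have hxu : ⁅x, ⁅x, y⁆⁆ = 0 := by rw [hx y, hfxy, zero_smul]
  -- `f x ⁅y, w⁆ = 0` since `y` is in the radical
  have hL2 : ∀ w : L, f x ⁅y, w⁆ = 0 := by
    intro w
    rw [hsym, ← hassoc]
    exact hyrad ⁅w, x⁆
  -- `⁅x, ⁅⁅x,y⁆, w⁆⁆ = ⁅⁅x,y⁆, ⁅x, w⁆⁆`
  have hL4 : ∀ w : L, ⁅x, ⁅(⁅x, y⁆), w⁆⁆ = ⁅(⁅x, y⁆), ⁅x, w⁆⁆ := by
    intro w
    rw [leibniz_lie, hxu, zero_lie, zero_add]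
  -- the key identity : `2 ⁅⁅x,y⁆, ⁅x,z⁆⁆ = f x z • ⁅x,y⁆`
  have hL3 : ∀ z : L, (2 : k) • ⁅(⁅x, y⁆), ⁅x, z⁆⁆ = f x z • ⁅x, y⁆ := by
    intro z
    have e1 : ⁅x, ⁅x, ⁅y, z⁆⁆⁆ = 0 := by rw [hx, hL2, zero_smul]
    have e2 : ⁅x, ⁅y, z⁆⁆ = ⁅(⁅x, y⁆), z⁆ + ⁅y, ⁅x, z⁆⁆ := leibniz_lie x y z
    rw [e2, lie_add, hL4] at e1
    -- e1 : ⁅⁅x,y⁆,⁅x,z⁆⁆ + ⁅x, ⁅y, ⁅x,z⁆⁆⁆ = 0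
    have e6 : ⁅x, ⁅y, ⁅x, z⁆⁆⁆ = -⁅(⁅x, y⁆), ⁅x, z⁆⁆ :=
      eq_neg_of_add_eq_zero_right e1
    have e4 : ⁅(⁅x, y⁆), ⁅x, z⁆⁆ = ⁅x, ⁅y, ⁅x, z⁆⁆⁆ - ⁅y, ⁅x, ⁅x, z⁆⁆⁆ :=
      lie_lie x y ⁅x, z⁆
    rw [e6, hx z, lie_smul] at e4
    -- e4 : A = -A - f x z • ⁅y, x⁆
    have : (2 : k) • ⁅(⁅x, y⁆), ⁅x, z⁆⁆ = -(f x z • ⁅y, x⁆) := by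
      rw [two_smul]
      calc ⁅(⁅x, y⁆), ⁅x, z⁆⁆ + ⁅(⁅x, y⁆), ⁅x, z⁆⁆
          = (-⁅(⁅x, y⁆), ⁅x, z⁆⁆ - f x z • ⁅y, x⁆) + ⁅(⁅x, y⁆), ⁅x, z⁆⁆ := by
            rw [← e4]
        _ = -(f x z • ⁅y, x⁆) := by abel
    rw [this, ← smul_neg, lie_skew]
  -- `f x ⁅⁅x,y⁆, z⁆ = 0`
  have hL5 : ∀ z : L, f x ⁅(⁅x, y⁆), z⁆ = 0 := by
    intro z
    rw [hassoc, hxu]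
    simp
  -- `ad u ∘ ad x ∘ ad u = 0`
  have hL7 : ∀ z : L, ⁅(⁅x, y⁆), ⁅x, ⁅(⁅x, y⁆), z⁆⁆⁆ = 0 := by
    intro z
    apply h2
    rw [hL3, hL5, zero_smul]
  -- `ad u ^ 2 = - ad u ∘ ad y ∘ ad x`
  have hL6 : ∀ w : L, ⁅(⁅x, y⁆), ⁅(⁅x, y⁆), w⁆⁆ = -⁅(⁅x, y⁆), ⁅y, ⁅x, w⁆⁆⁆ := by
    intro w
    have e : ⁅(⁅x, y⁆), w⁆ = ⁅x, ⁅y, w⁆⁆ - ⁅y, ⁅x, w⁆⁆ := lie_lie x y w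
    have e0 : ⁅(⁅x, y⁆), ⁅x, ⁅y, w⁆⁆⁆ = 0 := by
      apply h2
      rw [hL3, hL2, zero_smul]
    rw [e, lie_sub, e0, zero_sub]
  ext z
  have hform : ((LieAlgebra.ad k L ⁅x, y⁆ : Module.End k L) ^ 4) z
      = ⁅(⁅x, y⁆), ⁅(⁅x, y⁆), ⁅(⁅x, y⁆), ⁅(⁅x, y⁆), z⁆⁆⁆⁆ := by
    simp only [pow_succ, pow_zero, Module.End.mul_apply, Module.End.one_apply,
      LieAlgebra.ad_apply]
  rw [hform]
  rw [hL6 ⁅(⁅x, y⁆), ⁅(⁅x, y⁆), z⁆⁆]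
  have hx0' : ⁅x, ⁅(⁅x, y⁆), ⁅(⁅x, y⁆), z⁆⁆⁆ = 0 := by
    rw [hL4, hL7]
  rw [hx0']
  simp
end

section
/- Let L be a Lie algebra over a field k of characteristic not 2, and let x, y be extremal elements with f(x,y) = 0 and [x,y] ≠ 0, where f(x,·) is the functional of x. Then for all s, t ∈ k, the automorphisms exp(x,s) = id + s·ad_x + (s²/2)ad_x² and exp(y,t) satisfy the commutator relation exp(y,t)⁻¹ exp(x,s)⁻¹ exp(y,t) exp(x,s) = exp([y,x], ts) (equivalently, the group generated by the root groups U_x and U_y is nilpotent of class 2 with commutator the root group of [x,y]). -/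
/-- The exponential map `exp(a,s) = 1 + s·ad_a + (s²/2)·ad_a²` associated to an element
`a` of a Lie algebra. -/
def expMap (k : Type*) {L : Type*} [Field k] [LieRing L] [LieAlgebra k L] (a : L) (s : k) :
    L →ₗ[k] L :=
  LinearMap.id + s • LieAlgebra.ad k L a +
    (s ^ 2 / 2) • (LieAlgebra.ad k L a ∘ₗ LieAlgebra.ad k L a)

/-- Theorem 10.3(4): for extremal `x, y` with `f(x,y) = 0` and `⁅x,y⁆ ≠ 0`, the group
commutator of `exp(y,t)` and `exp(x,s)` equals `exp(⁅y,x⁆, ts)`; here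
`exp(a,s)⁻¹ = exp(a,-s)`. -/
theorem root_group_commutator {k L : Type*} [Field k] [LieRing L] [LieAlgebra k L]
    (hchar : (2 : k) ≠ 0)
    (f : L →ₗ[k] L →ₗ[k] k)
    (hsym : ∀ a b : L, f a b = f b a)
    (hassoc : ∀ a b c : L, f a ⁅b, c⁆ = f ⁅a, b⁆ c)
    (x y : L) (hx0 : x ≠ 0) (hy0 : y ≠ 0)
    (hx : ∀ z : L, ⁅x, ⁅x, z⁆⁆ = f x z • x)
    (hy : ∀ z : L, ⁅y, ⁅y, z⁆⁆ = f y z • y)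
    (hfxy : f x y = 0) (hxy : ⁅x, y⁆ ≠ (0 : L)) (s t : k) :
    expMap k x (-s) ∘ₗ expMap k x s = LinearMap.id ∧
    expMap k y (-t) ∘ₗ expMap k y t = LinearMap.id ∧
    expMap k y (-t) ∘ₗ expMap k x (-s) ∘ₗ expMap k y t ∘ₗ expMap k x s =
      expMap k ⁅y, x⁆ (t * s) := by
  -- basic scalar facts
  have hfyx : f y x = 0 := by rw [hsym]; exact hfxy
  have hfxx : f x x = 0 := by
    have h := hx x
    rw [lie_self, lie_zero] at h
    rcases smul_eq_zero.mp h.symm with h' | h'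
    · exact h'
    · exact absurd h' hx0
  have hfyy : f y y = 0 := by
    have h := hy y
    rw [lie_self, lie_zero] at h
    rcases smul_eq_zero.mp h.symm with h' | h'
    · exact h'
    · exact absurd h' hy0
  have hfxlx : ∀ w : L, f x ⁅x, w⁆ = 0 := by
    intro w; rw [hassoc, lie_self]; simp
  have hfyly : ∀ w : L, f y ⁅y, w⁆ = 0 := by
    intro w; rw [hassoc, lie_self]; simp
  have hxyskew : ⁅x, y⁆ = -⁅y, x⁆ := (lie_skew x y).symm
  have hfxly : ∀ w : L, f x ⁅y, w⁆ = -(f ⁅y, x⁆ w) := by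
    intro w; rw [hassoc, hxyskew, map_neg, LinearMap.neg_apply]
  have hfylx : ∀ w : L, f y ⁅x, w⁆ = f ⁅y, x⁆ w := by
    intro w; rw [hassoc]
  have hfxz : f x ⁅y, x⁆ = 0 := by
    rw [hsym, ← hassoc, lie_self, map_zero]
  have hfyz : f y ⁅y, x⁆ = 0 := hfyly x
  have hfzx : f ⁅y, x⁆ x = 0 := by rw [hsym]; exact hfxz
  have hfzy : f ⁅y, x⁆ y = 0 := by rw [hsym]; exact hfyz
  -- bracket vanishing
  have hxz : ⁅x, ⁅y, x⁆⁆ = 0 := by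
    rw [← lie_skew y x, lie_neg, hx y, hfxy, zero_smul, neg_zero]
  have hyz : ⁅y, ⁅y, x⁆⁆ = 0 := by
    rw [hy x, hfyx, zero_smul]
  have hfzlx : ∀ w : L, f ⁅y, x⁆ ⁅x, w⁆ = 0 := by
    intro w
    rw [hassoc]
    have : ⁅⁅y, x⁆, x⁆ = 0 := by rw [← lie_skew ⁅y, x⁆ x, hxz, neg_zero]
    rw [this]; simp
  have hfzly : ∀ w : L, f ⁅y, x⁆ ⁅y, w⁆ = 0 := by
    intro w
    rw [hassoc]
    have : ⁅⁅y, x⁆, y⁆ = 0 := by rw [← lie_skew ⁅y, x⁆ y, hyz, neg_zero]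
    rw [this]; simp
  -- the key cubic reductions
  have hr5 : ∀ w : L, ⁅x, ⁅y, ⁅x, w⁆⁆⁆ =
      (2⁻¹ * f x w) • ⁅y, x⁆ - (2⁻¹ * f ⁅y, x⁆ w) • x := by
    intro w
    have e1 : ⁅x, ⁅⁅x, y⁆, w⁆⁆ = ⁅x, ⁅y, ⁅x, w⁆⁆⁆ - f x w • ⁅y, x⁆ := by
      rw [leibniz_lie x ⁅x, y⁆ w, hx y, hfxy, zero_smul, zero_lie, zero_add,
        lie_lie, hx w, lie_smul]
    have e2 : f x ⁅y, w⁆ • x =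
        (⁅x, ⁅y, ⁅x, w⁆⁆⁆ - f x w • ⁅y, x⁆) + ⁅x, ⁅y, ⁅x, w⁆⁆⁆ := by
      rw [← hx ⁅y, w⁆]
      rw [leibniz_lie x y w, lie_add, e1]
    rw [hfxly w] at e2
    have e3 : (2 : k) • ⁅x, ⁅y, ⁅x, w⁆⁆⁆ = f x w • ⁅y, x⁆ - f ⁅y, x⁆ w • x := by
      linear_combination (norm := module) -e2
    refine smul_right_injective L hchar ?_
    show (2 : k) • ⁅x, ⁅y, ⁅x, w⁆⁆⁆ =
      (2 : k) • ((2⁻¹ * f x w) • ⁅y, x⁆ - (2⁻¹ * f ⁅y, x⁆ w) • x)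
    simp only [smul_sub, smul_smul, ← mul_assoc, mul_inv_cancel₀ hchar, one_mul]
    exact e3
  have hr6 : ∀ w : L, ⁅y, ⁅x, ⁅y, w⁆⁆⁆ =
      (2⁻¹ * f ⁅y, x⁆ w) • y - (2⁻¹ * f y w) • ⁅y, x⁆ := by
    intro w
    have e1 : ⁅y, ⁅⁅y, x⁆, w⁆⁆ = ⁅y, ⁅x, ⁅y, w⁆⁆⁆ - f y w • ⁅x, y⁆ := by
      rw [leibniz_lie y ⁅y, x⁆ w, hy x, hfyx, zero_smul, zero_lie, zero_add,
        lie_lie, hy w, lie_smul]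
    have e2 : f y ⁅x, w⁆ • y =
        (⁅y, ⁅x, ⁅y, w⁆⁆⁆ - f y w • ⁅x, y⁆) + ⁅y, ⁅x, ⁅y, w⁆⁆⁆ := by
      rw [← hy ⁅x, w⁆]
      rw [leibniz_lie y x w, lie_add, e1]
    rw [hfylx w, hxyskew] at e2
    have e3 : (2 : k) • ⁅y, ⁅x, ⁅y, w⁆⁆⁆ = f ⁅y, x⁆ w • y - f y w • ⁅y, x⁆ := by
      linear_combination (norm := module) -e2
    refine smul_right_injective L hchar ?_
    show (2 : k) • ⁅y, ⁅x, ⁅y, w⁆⁆⁆ =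
      (2 : k) • ((2⁻¹ * f ⁅y, x⁆ w) • y - (2⁻¹ * f y w) • ⁅y, x⁆)
    simp only [smul_sub, smul_smul, ← mul_assoc, mul_inv_cancel₀ hchar, one_mul]
    exact e3
  have hp : ∀ n : ℕ, ((2 : k) ^ n) ≠ 0 := fun n => pow_ne_zero n hchar
  have h4 : (4 : k) ≠ 0 := by have := hp 2; norm_num at this; exact this
  have h8 : (8 : k) ≠ 0 := by have := hp 3; norm_num at this; exact this
  have h16 : (16 : k) ≠ 0 := by have := hp 4; norm_num at this; exact this
  have h32 : (32 : k) ≠ 0 := by have := hp 5; norm_num at this; exact this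
  have h64 : (64 : k) ≠ 0 := by have := hp 6; norm_num at this; exact this
  have h128 : (128 : k) ≠ 0 := by have := hp 7; norm_num at this; exact this
  have h256 : (256 : k) ≠ 0 := by have := hp 8; norm_num at this; exact this
  refine ⟨?_, ?_, ?_⟩
  · ext v
    simp only [expMap, LinearMap.comp_apply, LinearMap.add_apply, LinearMap.smul_apply,
      LinearMap.id_apply, LieAlgebra.ad_apply, lie_add, lie_smul, hx, lie_self, lie_zero,
      smul_zero, map_add, map_smul, hfxlx, hfxx, lie_neg, map_neg, map_zero, map_sub, lie_sub]
    match_scalars <;> (try ring) <;>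
      (try field_simp [hchar, h4, h8, h16, h32, h64, h128, h256]) <;> (try ring)
  · ext v
    simp only [expMap, LinearMap.comp_apply, LinearMap.add_apply, LinearMap.smul_apply,
      LinearMap.id_apply, LieAlgebra.ad_apply, lie_add, lie_smul, hy, lie_self, lie_zero,
      smul_zero, map_add, map_smul, hfyly, hfyy, lie_neg, map_neg, map_zero, map_sub, lie_sub]
    match_scalars <;> (try ring) <;>
      (try field_simp [hchar, h4, h8, h16, h32, h64, h128, h256]) <;> (try ring)
  · ext v
    simp only [expMap, LinearMap.comp_apply, LinearMap.add_apply, LinearMap.smul_apply,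
      LinearMap.id_apply, LieAlgebra.ad_apply, lie_lie, lie_add, lie_sub, lie_smul, lie_neg,
      lie_self, lie_zero, smul_zero, hr5, hr6, hx, hy, hxz, hyz, hxyskew,
      map_add, map_sub, map_smul, map_neg, map_zero,
      hfxlx, hfyly, hfxly, hfylx, hfxx, hfyy, hfxy, hfyx, hfxz, hfyz, hfzx, hfzy,
      hfzlx, hfzly]
    match_scalars <;> (try ring) <;>
      (try field_simp [hchar, h4, h8, h16, h32, h64, h128, h256]) <;> (try ring)
end
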